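/- arXiv:1212.6091 — 9 statements merged into one kernel-verified Lean document; each statement's English description precedes it below -/
import Mathlib

section
/- Let r ≥ 1 and m ≥ 2 be integers. The number of permutations σ of {0,1,...,rm−1} satisfying ⌊σ(i)/r⌋ ≠ ⌊i/r⌋ for every i is divisible by r(m−1). -/
open Finset Equiv

section aux

variable {m r : ℕ}

private def Qpred (σ : Equiv.Perm (Fin m × Fin r)) : Prop := ∀ p, (σ p).1 ≠ p.1

private instance : DecidablePred (Qpred (m := m) (r := r)) := fun _ => by
  unfold Qpred; infer_instance

private lemma Q_conj (f : Fin m ≃ Fin m) (g : Fin m → (Fin r ≃ Fin r))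
    (σ : Equiv.Perm (Fin m × Fin r)) (hσ : Qpred σ) :
    Qpred ((Equiv.prodShear f g).permCongr σ) := by
  intro x
  rw [Equiv.permCongr_apply]
  intro h
  apply hσ ((Equiv.prodShear f g).symm x)
  apply f.injective
  have h2 : ((Equiv.prodShear f g) ((Equiv.prodShear f g).symm x)).1 = x.1 :=
    congrArg Prod.fst ((Equiv.prodShear f g).apply_symm_apply x)
  exact (show ((Equiv.prodShear f g) (σ ((Equiv.prodShear f g).symm x))).1 = x.1 from h).trans
    h2.symm

end aux

/-- For r ≥ 1 and m ≥ 2, the number of permutations σ of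
{0,...,rm−1} with ⌊σ(i)/r⌋ ≠ ⌊i/r⌋ for all i is divisible by r(m−1). -/
theorem stmt1 (r m : ℕ) (hr : 1 ≤ r) (hm : 2 ≤ m) :
    (r * (m - 1)) ∣ (Finset.univ.filter fun σ : Equiv.Perm (Fin (r * m)) =>
        ∀ i : Fin (r * m), (σ i : ℕ) / r ≠ (i : ℕ) / r).card := by
  classical
  have hm0 : 0 < m := by omega
  -- the equivalence
  set e : Fin m × Fin r ≃ Fin (r * m) :=
    finProdFinEquiv.trans (finCongr (Nat.mul_comm m r)) with he
  have ekey : ∀ p : Fin m × Fin r, ((e p : Fin (r * m)) : ℕ) / r = (p.1 : ℕ) := by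
    intro p
    have : ((e p : Fin (r * m)) : ℕ) = (p.2 : ℕ) + r * (p.1 : ℕ) := by
      simp [he, finProdFinEquiv]
    rw [this, Nat.add_mul_div_left _ _ (by omega), Nat.div_eq_of_lt p.2.2, Nat.zero_add]
  have ekey' : ∀ x : Fin (r * m), ((x : ℕ)) / r = ((e.symm x).1 : ℕ) := by
    intro x
    conv_lhs => rw [← e.apply_symm_apply x]
    exact ekey _
  -- transfer the count
  have hcard : (Finset.univ.filter fun σ : Equiv.Perm (Fin (r * m)) =>
        ∀ i : Fin (r * m), (σ i : ℕ) / r ≠ (i : ℕ) / r).card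
      = (Finset.univ.filter fun σ : Equiv.Perm (Fin m × Fin r) => Qpred σ).card := by
    apply Finset.card_bij' (fun σ _ => e.symm.permCongr σ) (fun σ _ => e.permCongr σ)
    · intro σ hσ
      simp only [Finset.mem_filter, Finset.mem_univ, true_and] at hσ ⊢
      intro p
      simp only [Equiv.permCongr_apply, Equiv.symm_symm]
      intro h
      apply hσ (e p)
      rw [ekey' (σ (e p)), ekey' (e p)]
      simp only [Equiv.symm_apply_apply]
      exact_mod_cast congrArg (fun q : Fin m => (q : ℕ)) h
    · intro σ hσ
      simp only [Finset.mem_filter, Finset.mem_univ, true_and] at hσ ⊢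
      intro i
      have h1 := ekey' ((e.permCongr σ) i)
      have h2 := ekey' i
      rw [h1, h2]
      simp only [Equiv.permCongr_apply]
      simp only [Equiv.symm_apply_apply]
      intro h
      exact hσ (e.symm i) (by exact_mod_cast Fin.val_injective h)
    · intro σ _; rw [← Equiv.permCongr_symm]; exact (e.permCongr).apply_symm_apply σ
    · intro σ _; rw [← Equiv.permCongr_symm]; exact (e.permCongr).symm_apply_apply σ
  rw [hcard]
  -- now work on Fin m × Fin r
  set S : Finset (Equiv.Perm (Fin m × Fin r)) :=
    Finset.univ.filter (fun σ => Qpred σ) with hS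
  set z : Fin m × Fin r := (⟨0, by omega⟩, ⟨0, by omega⟩) with hz
  set w : Fin m × Fin r := (⟨1, by omega⟩, ⟨0, by omega⟩) with hw
  -- fiber decomposition over σ z
  have hsum : S.card = ∑ p : Fin m × Fin r,
      (S.filter (fun σ => σ z = p)).card :=
    Finset.card_eq_sum_card_fiberwise (by intro σ _; exact Finset.mem_univ _)
  -- each good fiber has the same cardinality as the fiber of w
  have hfib : ∀ p : Fin m × Fin r, p.1 ≠ z.1 →
      (S.filter (fun σ => σ z = p)).card = (S.filter (fun σ => σ z = w)).card := by
    intro p hp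
    set f : Fin m ≃ Fin m := Equiv.swap p.1 w.1 with hf
    set g : Fin m → (Fin r ≃ Fin r) :=
      (fun a => if a = w.1 then Equiv.swap (⟨0, by omega⟩ : Fin r) p.2 else Equiv.refl _) with hg
    set τ : (Fin m × Fin r) ≃ (Fin m × Fin r) := Equiv.prodShear f g with hτ
    have hzw : z.1 ≠ w.1 := by simp [hz, hw, Fin.ext_iff]
    have hfz : f z.1 = z.1 := by
      rw [hf]; apply Equiv.swap_apply_of_ne_of_ne
      · exact fun h => hp h.symm
      · exact hzw
    have hτz : τ z = z := by
      rw [hτ]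
      have hgz : g z.1 z.2 = z.2 := by
        rw [hg]; simp only
        rw [if_neg hzw]
        rfl
      simp [Equiv.prodShear_apply, hfz, hgz]
    have hτw : τ w = p := by
      rw [hτ]
      have h1 : f w.1 = p.1 := by rw [hf]; exact Equiv.swap_apply_right _ _
      have h2 : g w.1 w.2 = p.2 := by
        rw [hg]; simp only [if_pos rfl]
        exact Equiv.swap_apply_left _ _
      simp [Equiv.prodShear_apply, h1, h2]
    -- bijection: conjugation by τ.symm (sends fiber p to fiber w)
    apply Finset.card_bij' (fun σ _ => τ.symm.permCongr σ) (fun σ _ => τ.permCongr σ)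
    · intro σ hσ
      simp only [hS, Finset.mem_filter, Finset.mem_univ, true_and] at hσ ⊢
      obtain ⟨hQ, hfz'⟩ := hσ
      constructor
      · have : τ.symm = Equiv.prodShear f.symm (fun b => (g (f.symm b)).symm) := by
          rw [hτ]; ext x <;> rfl
        rw [this]; exact Q_conj _ _ _ hQ
      · simp only [Equiv.permCongr_apply, Equiv.symm_symm]
        rw [hτz, hfz', ← hτw, Equiv.symm_apply_apply]
    · intro σ hσ
      simp only [hS, Finset.mem_filter, Finset.mem_univ, true_and] at hσ ⊢
      obtain ⟨hQ, hfz'⟩ := hσ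
      refine ⟨Q_conj _ _ _ hQ, ?_⟩
      simp only [Equiv.permCongr_apply]
      rw [← hτz, Equiv.symm_apply_apply, hfz', hτw]
    · intro σ _; rw [← Equiv.permCongr_symm]; exact (τ.permCongr).apply_symm_apply σ
    · intro σ _; rw [← Equiv.permCongr_symm]; exact (τ.permCongr).symm_apply_apply σ
  -- bad fibers are empty
  have hbad : ∀ p : Fin m × Fin r, p.1 = z.1 →
      (S.filter (fun σ => σ z = p)).card = 0 := by
    intro p hp
    rw [Finset.card_eq_zero, Finset.filter_eq_empty_iff]
    intro σ hσ
    rw [hS, Finset.mem_filter] at hσ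
    intro h
    exact hσ.2 z (by rw [h, hp])
  -- count good targets
  set T : Finset (Fin m × Fin r) := Finset.univ.filter (fun p => p.1 ≠ z.1) with hT
  have hTcard : T.card = (m - 1) * r := by
    have : T = (Finset.univ.filter (fun a : Fin m => a ≠ z.1)) ×ˢ (Finset.univ : Finset (Fin r)) := by
      ext p; simp [hT, Finset.mem_product]
    rw [this, Finset.card_product, Finset.filter_ne', Finset.card_erase_of_mem (Finset.mem_univ _)]
    simp [Nat.mul_comm]
  have : S.card = ∑ p ∈ T, (S.filter (fun σ => σ z = p)).card := by
    rw [hsum]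
    rw [← Finset.sum_filter_add_sum_filter_not Finset.univ (fun p => p.1 ≠ z.1)]
    have h2 : ∑ p ∈ Finset.univ.filter (fun p : Fin m × Fin r => ¬ p.1 ≠ z.1),
        (S.filter (fun σ => σ z = p)).card = 0 := by
      apply Finset.sum_eq_zero
      intro p hp
      rw [Finset.mem_filter] at hp
      exact hbad p (by simpa using hp.2)
    rw [h2, Nat.add_zero]
  rw [this]
  rw [Finset.sum_congr rfl (fun p hp => hfib p (by rw [hT, Finset.mem_filter] at hp; exact hp.2))]
  rw [Finset.sum_const, hTcard, smul_eq_mul]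
  exact ⟨(S.filter (fun σ => σ z = w)).card, by ring⟩
end

section
/- Consider the set S of permutations σ of ZMod 5 such that σ(i) − i ∈ {0, 1, 2} for every i. Then |S| = 13, and S cannot be partitioned into subsets each of which is a 1-factorization, where a 1-factorization is a subset F of S such that for every ordered pair (i,j) of elements of ZMod 5 with j − i ∈ {0,1,2}, exactly one σ ∈ F maps i to j. -/
/-- Let S be the set of permutations σ of ZMod 5 with
σ(i) − i ∈ {0,1,2} for all i.  Then |S| = 13 and S cannot be partitioned into
1-factorizations (subsets F of S such that for every pair (i,j) with
j − i ∈ {0,1,2}, exactly one σ ∈ F maps i to j). -/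
theorem stmt2 :
    (Finset.univ.filter fun σ : Equiv.Perm (ZMod 5) =>
        ∀ i, σ i - i ∈ ({0, 1, 2} : Finset (ZMod 5))).card = 13 ∧
    ¬ ∃ P : Finset (Finset (Equiv.Perm (ZMod 5))),
        (∀ F ∈ P, ∀ σ ∈ F, ∀ i, σ i - i ∈ ({0, 1, 2} : Finset (ZMod 5))) ∧
        (∀ σ : Equiv.Perm (ZMod 5), (∀ i, σ i - i ∈ ({0, 1, 2} : Finset (ZMod 5))) →
          ∃! F, F ∈ P ∧ σ ∈ F) ∧
        (∀ F ∈ P, ∀ i j : ZMod 5, j - i ∈ ({0, 1, 2} : Finset (ZMod 5)) →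
          ∃! σ, σ ∈ F ∧ σ i = j) := by
  have hScard : (Finset.univ.filter fun σ : Equiv.Perm (ZMod 5) =>
      ∀ i, σ i - i ∈ ({0, 1, 2} : Finset (ZMod 5))).card = 13 := by decide
  refine ⟨hScard, ?_⟩
  rintro ⟨P, h1, h2, h3⟩
  set E : Finset (ZMod 5 × ZMod 5) :=
    Finset.univ.filter (fun p => p.2 - p.1 ∈ ({0,1,2} : Finset (ZMod 5))) with hE
  have hEcard : E.card = 15 := by decide
  -- each F ∈ P has card 3
  have hF3 : ∀ F ∈ P, F.card = 3 := by
    intro F hF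
    have key : (F ×ˢ (Finset.univ : Finset (ZMod 5))).card = E.card := by
      apply Finset.card_bij (fun p _ => (p.2, p.1 p.2))
      · rintro ⟨σ, i⟩ hp
        simp only [Finset.mem_product] at hp
        simp only [hE, Finset.mem_filter, Finset.mem_univ, true_and]
        exact h1 F hF σ hp.1 i
      · rintro ⟨σ, i⟩ hp ⟨τ, j⟩ hq heq
        simp only [Finset.mem_product] at hp hq
        simp only [Prod.mk.injEq] at heq
        obtain ⟨rfl, heq2⟩ := heq
        have hedge : σ i - i ∈ ({0,1,2} : Finset (ZMod 5)) := h1 F hF σ hp.1 i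
        obtain ⟨ρ, _, huniq⟩ := h3 F hF i (σ i) hedge
        have e1 : σ = ρ := huniq σ ⟨hp.1, rfl⟩
        have e2 : τ = ρ := huniq τ ⟨hq.1, heq2.symm⟩
        simp [e1, e2]
      · rintro ⟨i, j⟩ hij
        simp only [hE, Finset.mem_filter, Finset.mem_univ, true_and] at hij
        obtain ⟨σ, ⟨hσF, hσij⟩, _⟩ := h3 F hF i j hij
        exact ⟨(σ, i), Finset.mem_product.2 ⟨hσF, Finset.mem_univ i⟩, by simp [hσij]⟩
    rw [Finset.card_product, hEcard] at key
    have : (Finset.univ : Finset (ZMod 5)).card = 5 := by decide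
    rw [this] at key
    omega
  -- S = biUnion of P
  have hSeq : (Finset.univ.filter fun σ : Equiv.Perm (ZMod 5) =>
      ∀ i, σ i - i ∈ ({0, 1, 2} : Finset (ZMod 5))) = P.biUnion id := by
    ext σ
    simp only [Finset.mem_filter, Finset.mem_univ, true_and, Finset.mem_biUnion, id]
    constructor
    · intro hσ
      obtain ⟨F, ⟨hFP, hσF⟩, _⟩ := h2 σ hσ
      exact ⟨F, hFP, hσF⟩
    · rintro ⟨F, hFP, hσF⟩
      exact h1 F hFP σ hσF
  have hdisj : ∀ F ∈ P, ∀ G ∈ P, F ≠ G → Disjoint F G := by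
    intro F hF G hG hne
    rw [Finset.disjoint_left]
    intro σ hσF hσG
    have hσ : ∀ i, σ i - i ∈ ({0,1,2} : Finset (ZMod 5)) := h1 F hF σ hσF
    obtain ⟨H, _, huniq⟩ := h2 σ hσ
    exact hne ((huniq F ⟨hF, hσF⟩).trans (huniq G ⟨hG, hσG⟩).symm)
  have : (P.biUnion id).card = ∑ F ∈ P, F.card := Finset.card_biUnion hdisj
  rw [hSeq, this] at hScard
  rw [Finset.sum_congr rfl hF3, Finset.sum_const, smul_eq_mul] at hScard
  omega
end

section
/- For every positive integer n, the set of all permutations σ of Fin (2n) satisfying ⌊σ(i)/n⌋ ≠ ⌊i/n⌋ for all i can be partitioned into subsets such that each subset F satisfies: for every ordered pair (i,j) with ⌊j/n⌋ ≠ ⌊i/n⌋, exactly one permutation σ ∈ F has σ(i) = j. -/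
/-!
Let `H` be the group of rotations `i ↦ n⌊i/n⌋ + (i + a) mod n` (`a : ℤ/n`) of the two blocks of
`Fin (2n)`. It preserves blocks, so right multiplication by `H` maps crossing permutations to
crossing ones, and the left cosets `σH` of the crossing permutations partition them.
A permutation `σh` of such a coset sends `i` to `j` iff `h i = σ⁻¹ j`. For a crossing pair `(i, j)`
the point `σ⁻¹ j` lies outside the block of `j`, hence (there being only two blocks) in the block
of `i`, and `H` acts regularly on that block: exactly one `h` works.
-/

open Equiv

section LeftCoset

variable {G : Type*} [Group G] [Fintype G] {H : Subgroup G}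

variable (H) in
open Classical in
noncomputable def leftCosetFinset (σ : G) : Finset G := {τ | σ⁻¹ * τ ∈ H}

@[simp]
theorem mem_leftCosetFinset {σ τ : G} : τ ∈ leftCosetFinset H σ ↔ σ⁻¹ * τ ∈ H := by
  simp [leftCosetFinset]

theorem leftCosetFinset_eq_of_mem {σ τ : G} (h : τ ∈ leftCosetFinset H σ) :
    leftCosetFinset H τ = leftCosetFinset H σ := by
  ext ρ
  rw [mem_leftCosetFinset, mem_leftCosetFinset,
    ← H.mul_mem_cancel_left (mem_leftCosetFinset.mp h)]
  group

end LeftCoset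

section PermCoset

variable {α : Type*} [Fintype α] [DecidableEq α] {H : Subgroup (Perm α)}

theorem existsUnique_mem_leftCosetFinset_apply_eq {σ : Perm α} {i j : α}
    (h : ∃! g, g ∈ H ∧ g i = σ⁻¹ j) : ∃! τ, τ ∈ leftCosetFinset H σ ∧ τ i = j := by
  obtain ⟨g, ⟨hg, hgi⟩, huniq⟩ := h
  refine ⟨σ * g, ⟨by simpa using hg, by simp [hgi]⟩, ?_⟩
  rintro τ ⟨hτ, hτi⟩
  rw [← huniq (σ⁻¹ * τ) ⟨mem_leftCosetFinset.mp hτ, by simp [hτi]⟩, mul_inv_cancel_left]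

theorem exists_partition_of_existsUnique_apply_eq (S : Perm α → Prop) (A : α → α → Prop)
    (hS : ∀ σ, S σ → ∀ g ∈ H, S (σ * g))
    (hA : ∀ σ, S σ → ∀ i j, A i j → ∃! g, g ∈ H ∧ g i = σ⁻¹ j) :
    ∃ P : Finset (Finset (Perm α)),
      (∀ F ∈ P, ∀ σ ∈ F, S σ) ∧ (∀ σ, S σ → ∃! F, F ∈ P ∧ σ ∈ F) ∧
      (∀ F ∈ P, ∀ i j, A i j → ∃! σ, σ ∈ F ∧ σ i = j) := by
  classical
  refine ⟨(Finset.univ.filter S).image (leftCosetFinset H), ?_, ?_, ?_⟩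
  · simp only [Finset.mem_image, Finset.mem_filter, Finset.mem_univ, true_and]
    rintro _ ⟨σ, hσ, rfl⟩ τ hτ
    simpa using hS σ hσ _ (mem_leftCosetFinset.mp hτ)
  · intro σ hσ
    refine ⟨leftCosetFinset H σ,
      ⟨Finset.mem_image_of_mem _ (by simpa using hσ), by simp [H.one_mem]⟩, ?_⟩
    rintro _ ⟨hF, hσF⟩
    obtain ⟨τ, -, rfl⟩ := Finset.mem_image.mp hF
    exact (leftCosetFinset_eq_of_mem hσF).symm
  · simp only [Finset.mem_image, Finset.mem_filter, Finset.mem_univ, true_and]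
    rintro _ ⟨σ, hσ, rfl⟩ i j hij
    exact existsUnique_mem_leftCosetFinset_apply_eq (hA σ hσ i j hij)

end PermCoset

section BlockRotation

variable {m n : ℕ} [NeZero n]

def blockRotation (a : Fin n) : Perm (Fin (m * n)) :=
  finProdFinEquiv.permCongr ((Equiv.refl (Fin m)).prodCongr (Equiv.addRight a))

theorem finProdFinEquiv_symm_blockRotation_apply (a : Fin n) (i : Fin (m * n)) :
    finProdFinEquiv.symm (blockRotation a i) = (i.divNat, i.modNat + a) := by
  simp [blockRotation, Equiv.permCongr_apply]

@[simp]
theorem divNat_blockRotation_apply (a : Fin n) (i : Fin (m * n)) :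
    (blockRotation a i).divNat = i.divNat := by
  simpa using congrArg Prod.fst (finProdFinEquiv_symm_blockRotation_apply a i)

@[simp]
theorem modNat_blockRotation_apply (a : Fin n) (i : Fin (m * n)) :
    (blockRotation a i).modNat = i.modNat + a := by
  simpa using congrArg Prod.snd (finProdFinEquiv_symm_blockRotation_apply a i)

theorem blockRotation_apply_eq_iff {a : Fin n} {i k : Fin (m * n)} :
    blockRotation a i = k ↔ i.divNat = k.divNat ∧ i.modNat + a = k.modNat := by
  rw [← finProdFinEquiv.symm.injective.eq_iff, finProdFinEquiv_symm_blockRotation_apply]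
  simp [Prod.ext_iff]

theorem blockRotation_zero : blockRotation 0 = (1 : Perm (Fin (m * n))) := by
  ext1 i
  simp [blockRotation_apply_eq_iff]

theorem blockRotation_add (a b : Fin n) :
    blockRotation (a + b) = (blockRotation a * blockRotation b : Perm (Fin (m * n))) := by
  ext1 i
  rw [blockRotation_apply_eq_iff, Perm.mul_apply, divNat_blockRotation_apply,
    divNat_blockRotation_apply, modNat_blockRotation_apply, modNat_blockRotation_apply]
  exact ⟨rfl, by abel⟩

variable (m n) in
def blockRotations : Subgroup (Perm (Fin (m * n))) where
  carrier := Set.range blockRotation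
  one_mem' := ⟨0, blockRotation_zero⟩
  mul_mem' := by
    rintro _ _ ⟨a, rfl⟩ ⟨b, rfl⟩
    exact ⟨a + b, blockRotation_add a b⟩
  inv_mem' := by
    rintro _ ⟨a, rfl⟩
    refine ⟨-a, eq_inv_of_mul_eq_one_left ?_⟩
    rw [← blockRotation_add, neg_add_cancel, blockRotation_zero]

theorem divNat_apply_of_mem_blockRotations {g : Perm (Fin (m * n))}
    (hg : g ∈ blockRotations m n) (i : Fin (m * n)) : (g i).divNat = i.divNat := by
  obtain ⟨a, rfl⟩ := hg
  exact divNat_blockRotation_apply a i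

theorem existsUnique_mem_blockRotations_apply_eq {i k : Fin (m * n)}
    (h : i.divNat = k.divNat) : ∃! g, g ∈ blockRotations m n ∧ g i = k := by
  refine ⟨blockRotation (k.modNat - i.modNat), ⟨⟨_, rfl⟩, ?_⟩, ?_⟩
  · simp [blockRotation_apply_eq_iff, h]
  · rintro _ ⟨⟨a, rfl⟩, hak⟩
    rw [blockRotation_apply_eq_iff] at hak
    rw [← hak.2, add_sub_cancel_left]

end BlockRotation

/-- For every n > 0, the set of all permutations σ of Fin (2n) with
⌊σ(i)/n⌋ ≠ ⌊i/n⌋ for all i can be partitioned into subsets F such that for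
every ordered pair (i,j) with ⌊j/n⌋ ≠ ⌊i/n⌋, exactly one σ ∈ F has σ(i) = j. -/
theorem stmt4 (n : ℕ) (hn : 0 < n) :
    ∃ P : Finset (Finset (Equiv.Perm (Fin (2 * n)))),
      (∀ F ∈ P, ∀ σ ∈ F, ∀ i : Fin (2 * n), (σ i : ℕ) / n ≠ (i : ℕ) / n) ∧
      (∀ σ : Equiv.Perm (Fin (2 * n)), (∀ i : Fin (2 * n), (σ i : ℕ) / n ≠ (i : ℕ) / n) →
        ∃! F, F ∈ P ∧ σ ∈ F) ∧
      (∀ F ∈ P, ∀ i j : Fin (2 * n), (j : ℕ) / n ≠ (i : ℕ) / n →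
        ∃! σ, σ ∈ F ∧ σ i = j) := by
  have : NeZero n := NeZero.of_pos hn
  apply exists_partition_of_existsUnique_apply_eq (H := blockRotations 2 n)
  · intro σ hσ g hg i
    have hgi : (g i : ℕ) / n = i / n := congrArg Fin.val (divNat_apply_of_mem_blockRotations hg i)
    rw [Perm.mul_apply, ← hgi]
    exact hσ (g i)
  · intro σ hσ i j hij
    apply existsUnique_mem_blockRotations_apply_eq
    have hj : (j : ℕ) / n ≠ (σ⁻¹ j : ℕ) / n := by simpa using hσ (σ⁻¹ j)
    have hij' : j.divNat ≠ i.divNat := fun h => hij (congrArg Fin.val h)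
    have hj' : j.divNat ≠ (σ⁻¹ j).divNat := fun h => hj (congrArg Fin.val h)
    omega
end

section
/- The set of all derangements of Fin 4 (permutations with no fixed points) can be partitioned into subsets such that each subset F satisfies: for every ordered pair (i,j) with i ≠ j, exactly one permutation σ ∈ F has σ(i) = j. (Each such subset necessarily has 3 elements.) -/
set_option maxRecDepth 4000

private def mk4 (f g : Fin 4 → Fin 4) (h1 : Function.LeftInverse g f)
    (h2 : Function.RightInverse g f) : Equiv.Perm (Fin 4) := ⟨f, g, h1, h2⟩

private def a1 : Equiv.Perm (Fin 4) := mk4 ![1,0,3,2] ![1,0,3,2] (by decide) (by decide)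
private def a2 : Equiv.Perm (Fin 4) := mk4 ![2,3,1,0] ![3,2,0,1] (by decide) (by decide)
private def a3 : Equiv.Perm (Fin 4) := mk4 ![3,2,0,1] ![2,3,1,0] (by decide) (by decide)
private def b1 : Equiv.Perm (Fin 4) := mk4 ![1,2,3,0] ![3,0,1,2] (by decide) (by decide)
private def b2 : Equiv.Perm (Fin 4) := mk4 ![2,3,0,1] ![2,3,0,1] (by decide) (by decide)
private def b3 : Equiv.Perm (Fin 4) := mk4 ![3,0,1,2] ![1,2,3,0] (by decide) (by decide)
private def c1 : Equiv.Perm (Fin 4) := mk4 ![1,3,0,2] ![2,0,3,1] (by decide) (by decide)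
private def c2 : Equiv.Perm (Fin 4) := mk4 ![2,0,3,1] ![1,3,0,2] (by decide) (by decide)
private def c3 : Equiv.Perm (Fin 4) := mk4 ![3,2,1,0] ![3,2,1,0] (by decide) (by decide)

private def FA : Finset (Equiv.Perm (Fin 4)) := {a1, a2, a3}
private def FB : Finset (Equiv.Perm (Fin 4)) := {b1, b2, b3}
private def FC : Finset (Equiv.Perm (Fin 4)) := {c1, c2, c3}

private def Pdef : Finset (Finset (Equiv.Perm (Fin 4))) := {FA, FB, FC}

private lemma mem_Pdef (F : Finset (Equiv.Perm (Fin 4))) :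
    F ∈ Pdef ↔ F = FA ∨ F = FB ∨ F = FC := by
  simp [Pdef]

private lemma hder : ∀ σ ∈ FA, ∀ i, σ i ≠ i := by decide
private lemma hderB : ∀ σ ∈ FB, ∀ i, σ i ≠ i := by decide
private lemma hderC : ∀ σ ∈ FC, ∀ i, σ i ≠ i := by decide

private lemma hcover : ∀ σ : Equiv.Perm (Fin 4), (∀ i, σ i ≠ i) →
    σ ∈ FA ∨ σ ∈ FB ∨ σ ∈ FC := by decide

private lemma hdisj : ∀ σ : Equiv.Perm (Fin 4),
    (σ ∈ FA → σ ∉ FB) ∧ (σ ∈ FA → σ ∉ FC) ∧ (σ ∈ FB → σ ∉ FC) := by decide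

private lemma hexA : ∀ i j : Fin 4, i ≠ j → ∃ σ ∈ FA, σ i = j := by decide
private lemma hexB : ∀ i j : Fin 4, i ≠ j → ∃ σ ∈ FB, σ i = j := by decide
private lemma hexC : ∀ i j : Fin 4, i ≠ j → ∃ σ ∈ FC, σ i = j := by decide

private lemma huniqA : ∀ σ ∈ FA, ∀ τ ∈ FA, ∀ i j : Fin 4,
    σ i = j → τ i = j → σ = τ := by decide
private lemma huniqB : ∀ σ ∈ FB, ∀ τ ∈ FB, ∀ i j : Fin 4,
    σ i = j → τ i = j → σ = τ := by decide
private lemma huniqC : ∀ σ ∈ FC, ∀ τ ∈ FC, ∀ i j : Fin 4,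
    σ i = j → τ i = j → σ = τ := by decide

/-- The set of all derangements of Fin 4 can be partitioned into subsets F
such that for every ordered pair (i,j) with i ≠ j, exactly one σ ∈ F has
σ(i) = j (each subset is a 1-factorization of L_{4,1}). -/
theorem stmt_L4_1 :
    ∃ P : Finset (Finset (Equiv.Perm (Fin 4))),
      (∀ F ∈ P, ∀ σ ∈ F, ∀ i, σ i ≠ i) ∧
      (∀ σ : Equiv.Perm (Fin 4), (∀ i, σ i ≠ i) → ∃! F, F ∈ P ∧ σ ∈ F) ∧
      (∀ F ∈ P, ∀ i j : Fin 4, i ≠ j → ∃! σ, σ ∈ F ∧ σ i = j) := by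
  refine ⟨Pdef, ?_, ?_, ?_⟩
  · intro F hF
    rcases (mem_Pdef F).1 hF with rfl | rfl | rfl
    exacts [hder, hderB, hderC]
  · intro σ hσ
    have hA : FA ∈ Pdef := (mem_Pdef FA).2 (Or.inl rfl)
    have hB : FB ∈ Pdef := (mem_Pdef FB).2 (Or.inr (Or.inl rfl))
    have hC : FC ∈ Pdef := (mem_Pdef FC).2 (Or.inr (Or.inr rfl))
    rcases hcover σ hσ with h | h | h
    · refine ⟨FA, ⟨hA, h⟩, ?_⟩
      rintro F' ⟨hF', hσF'⟩
      rcases (mem_Pdef F').1 hF' with rfl | rfl | rfl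
      · rfl
      · exact absurd hσF' ((hdisj σ).1 h)
      · exact absurd hσF' ((hdisj σ).2.1 h)
    · refine ⟨FB, ⟨hB, h⟩, ?_⟩
      rintro F' ⟨hF', hσF'⟩
      rcases (mem_Pdef F').1 hF' with rfl | rfl | rfl
      · exact absurd h ((hdisj σ).1 hσF')
      · rfl
      · exact absurd hσF' ((hdisj σ).2.2 h)
    · refine ⟨FC, ⟨hC, h⟩, ?_⟩
      rintro F' ⟨hF', hσF'⟩
      rcases (mem_Pdef F').1 hF' with rfl | rfl | rfl
      · exact absurd h ((hdisj σ).2.1 hσF')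
      · exact absurd h ((hdisj σ).2.2 hσF')
      · rfl
  · intro F hF i j hij
    rcases (mem_Pdef F).1 hF with rfl | rfl | rfl
    · obtain ⟨σ, hσ, hσij⟩ := hexA i j hij
      exact ⟨σ, ⟨hσ, hσij⟩, fun τ ⟨hτ, hτij⟩ => huniqA τ hτ σ hσ i j hτij hσij⟩
    · obtain ⟨σ, hσ, hσij⟩ := hexB i j hij
      exact ⟨σ, ⟨hσ, hσij⟩, fun τ ⟨hτ, hτij⟩ => huniqB τ hτ σ hσ i j hτij hσij⟩
    · obtain ⟨σ, hσ, hσij⟩ := hexC i j hij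
      exact ⟨σ, ⟨hσ, hσij⟩, fun τ ⟨hτ, hτij⟩ => huniqC τ hτ σ hσ i j hτij hσij⟩
end

section
/- The set of all derangements of Fin 5 (permutations with no fixed points) can be partitioned into subsets such that each subset F satisfies: for every ordered pair (i,j) with i ≠ j, exactly one permutation σ ∈ F has σ(i) = j. (Each such subset necessarily has 4 elements.) -/
private def mkp (v w : Fin 5 → Fin 5) (h1 : Function.LeftInverse w v := by decide) (h2 : Function.RightInverse w v := by decide) : Equiv.Perm (Fin 5) := ⟨v, w, h1, h2⟩

private def p0_0 : Equiv.Perm (Fin 5) := mkp ![1, 0, 3, 4, 2] ![1, 0, 4, 2, 3]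
private def p0_1 : Equiv.Perm (Fin 5) := mkp ![2, 3, 4, 0, 1] ![3, 4, 0, 1, 2]
private def p0_2 : Equiv.Perm (Fin 5) := mkp ![3, 4, 1, 2, 0] ![4, 2, 3, 0, 1]
private def p0_3 : Equiv.Perm (Fin 5) := mkp ![4, 2, 0, 1, 3] ![2, 3, 1, 4, 0]
private def p1_0 : Equiv.Perm (Fin 5) := mkp ![1, 0, 4, 2, 3] ![1, 0, 3, 4, 2]
private def p1_1 : Equiv.Perm (Fin 5) := mkp ![2, 3, 0, 4, 1] ![2, 4, 0, 1, 3]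
private def p1_2 : Equiv.Perm (Fin 5) := mkp ![3, 4, 1, 0, 2] ![3, 2, 4, 0, 1]
private def p1_3 : Equiv.Perm (Fin 5) := mkp ![4, 2, 3, 1, 0] ![4, 3, 1, 2, 0]
private def p2_0 : Equiv.Perm (Fin 5) := mkp ![1, 2, 0, 4, 3] ![2, 0, 1, 4, 3]
private def p2_1 : Equiv.Perm (Fin 5) := mkp ![2, 4, 3, 0, 1] ![3, 4, 0, 2, 1]
private def p2_2 : Equiv.Perm (Fin 5) := mkp ![3, 0, 4, 1, 2] ![1, 3, 4, 0, 2]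
private def p2_3 : Equiv.Perm (Fin 5) := mkp ![4, 3, 1, 2, 0] ![4, 2, 3, 1, 0]
private def p3_0 : Equiv.Perm (Fin 5) := mkp ![1, 2, 3, 4, 0] ![4, 0, 1, 2, 3]
private def p3_1 : Equiv.Perm (Fin 5) := mkp ![2, 4, 0, 1, 3] ![2, 3, 0, 4, 1]
private def p3_2 : Equiv.Perm (Fin 5) := mkp ![3, 0, 4, 2, 1] ![1, 4, 3, 0, 2]
private def p3_3 : Equiv.Perm (Fin 5) := mkp ![4, 3, 1, 0, 2] ![3, 2, 4, 1, 0]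
private def p4_0 : Equiv.Perm (Fin 5) := mkp ![1, 2, 4, 0, 3] ![3, 0, 1, 4, 2]
private def p4_1 : Equiv.Perm (Fin 5) := mkp ![2, 3, 1, 4, 0] ![4, 2, 0, 1, 3]
private def p4_2 : Equiv.Perm (Fin 5) := mkp ![3, 4, 0, 2, 1] ![2, 4, 3, 0, 1]
private def p4_3 : Equiv.Perm (Fin 5) := mkp ![4, 0, 3, 1, 2] ![1, 3, 4, 2, 0]
private def p5_0 : Equiv.Perm (Fin 5) := mkp ![1, 3, 0, 4, 2] ![2, 0, 4, 1, 3]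
private def p5_1 : Equiv.Perm (Fin 5) := mkp ![2, 4, 1, 0, 3] ![3, 2, 0, 4, 1]
private def p5_2 : Equiv.Perm (Fin 5) := mkp ![3, 2, 4, 1, 0] ![4, 3, 1, 0, 2]
private def p5_3 : Equiv.Perm (Fin 5) := mkp ![4, 0, 3, 2, 1] ![1, 4, 3, 2, 0]
private def p6_0 : Equiv.Perm (Fin 5) := mkp ![1, 3, 4, 0, 2] ![3, 0, 4, 1, 2]
private def p6_1 : Equiv.Perm (Fin 5) := mkp ![2, 4, 3, 1, 0] ![4, 3, 0, 2, 1]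
private def p6_2 : Equiv.Perm (Fin 5) := mkp ![3, 2, 0, 4, 1] ![2, 4, 1, 0, 3]
private def p6_3 : Equiv.Perm (Fin 5) := mkp ![4, 0, 1, 2, 3] ![1, 2, 3, 4, 0]
private def p7_0 : Equiv.Perm (Fin 5) := mkp ![1, 3, 4, 2, 0] ![4, 0, 3, 1, 2]
private def p7_1 : Equiv.Perm (Fin 5) := mkp ![2, 0, 3, 4, 1] ![1, 4, 0, 2, 3]
private def p7_2 : Equiv.Perm (Fin 5) := mkp ![3, 4, 0, 1, 2] ![2, 3, 4, 0, 1]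
private def p7_3 : Equiv.Perm (Fin 5) := mkp ![4, 2, 1, 0, 3] ![3, 2, 1, 4, 0]
private def p8_0 : Equiv.Perm (Fin 5) := mkp ![1, 4, 0, 2, 3] ![2, 0, 3, 4, 1]
private def p8_1 : Equiv.Perm (Fin 5) := mkp ![2, 3, 4, 1, 0] ![4, 3, 0, 1, 2]
private def p8_2 : Equiv.Perm (Fin 5) := mkp ![3, 0, 1, 4, 2] ![1, 2, 4, 0, 3]
private def p8_3 : Equiv.Perm (Fin 5) := mkp ![4, 2, 3, 0, 1] ![3, 4, 1, 2, 0]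
private def p9_0 : Equiv.Perm (Fin 5) := mkp ![1, 4, 3, 0, 2] ![3, 0, 4, 2, 1]
private def p9_1 : Equiv.Perm (Fin 5) := mkp ![2, 0, 4, 1, 3] ![1, 3, 0, 4, 2]
private def p9_2 : Equiv.Perm (Fin 5) := mkp ![3, 2, 1, 4, 0] ![4, 2, 1, 0, 3]
private def p9_3 : Equiv.Perm (Fin 5) := mkp ![4, 3, 0, 2, 1] ![2, 4, 3, 1, 0]
private def p10_0 : Equiv.Perm (Fin 5) := mkp ![1, 4, 3, 2, 0] ![4, 0, 3, 2, 1]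
private def p10_1 : Equiv.Perm (Fin 5) := mkp ![2, 0, 1, 4, 3] ![1, 2, 0, 4, 3]
private def p10_2 : Equiv.Perm (Fin 5) := mkp ![3, 2, 4, 0, 1] ![3, 4, 1, 0, 2]
private def p10_3 : Equiv.Perm (Fin 5) := mkp ![4, 3, 0, 1, 2] ![2, 3, 4, 1, 0]

private def L0 : List (Equiv.Perm (Fin 5)) := [p0_0, p0_1, p0_2, p0_3]
private def L1 : List (Equiv.Perm (Fin 5)) := [p1_0, p1_1, p1_2, p1_3]
private def L2 : List (Equiv.Perm (Fin 5)) := [p2_0, p2_1, p2_2, p2_3]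
private def L3 : List (Equiv.Perm (Fin 5)) := [p3_0, p3_1, p3_2, p3_3]
private def L4 : List (Equiv.Perm (Fin 5)) := [p4_0, p4_1, p4_2, p4_3]
private def L5 : List (Equiv.Perm (Fin 5)) := [p5_0, p5_1, p5_2, p5_3]
private def L6 : List (Equiv.Perm (Fin 5)) := [p6_0, p6_1, p6_2, p6_3]
private def L7 : List (Equiv.Perm (Fin 5)) := [p7_0, p7_1, p7_2, p7_3]
private def L8 : List (Equiv.Perm (Fin 5)) := [p8_0, p8_1, p8_2, p8_3]
private def L9 : List (Equiv.Perm (Fin 5)) := [p9_0, p9_1, p9_2, p9_3]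
private def L10 : List (Equiv.Perm (Fin 5)) := [p10_0, p10_1, p10_2, p10_3]

private def LL : List (List (Equiv.Perm (Fin 5))) := [L0, L1, L2, L3, L4, L5, L6, L7, L8, L9, L10]
private def DL : List (Equiv.Perm (Fin 5)) := [p0_0, p0_1, p0_2, p0_3, p1_0, p1_1, p1_2, p1_3, p2_0, p2_1, p2_2, p2_3, p3_0, p3_1, p3_2, p3_3, p4_0, p4_1, p4_2, p4_3, p5_0, p5_1, p5_2, p5_3, p6_0, p6_1, p6_2, p6_3, p7_0, p7_1, p7_2, p7_3, p8_0, p8_1, p8_2, p8_3, p9_0, p9_1, p9_2, p9_3, p10_0, p10_1, p10_2, p10_3]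

private def F0 : Finset (Equiv.Perm (Fin 5)) := ⟨↑L0, by decide⟩
private def F1 : Finset (Equiv.Perm (Fin 5)) := ⟨↑L1, by decide⟩
private def F2 : Finset (Equiv.Perm (Fin 5)) := ⟨↑L2, by decide⟩
private def F3 : Finset (Equiv.Perm (Fin 5)) := ⟨↑L3, by decide⟩
private def F4 : Finset (Equiv.Perm (Fin 5)) := ⟨↑L4, by decide⟩
private def F5 : Finset (Equiv.Perm (Fin 5)) := ⟨↑L5, by decide⟩
private def F6 : Finset (Equiv.Perm (Fin 5)) := ⟨↑L6, by decide⟩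
private def F7 : Finset (Equiv.Perm (Fin 5)) := ⟨↑L7, by decide⟩
private def F8 : Finset (Equiv.Perm (Fin 5)) := ⟨↑L8, by decide⟩
private def F9 : Finset (Equiv.Perm (Fin 5)) := ⟨↑L9, by decide⟩
private def F10 : Finset (Equiv.Perm (Fin 5)) := ⟨↑L10, by decide⟩
private def LP : List (Finset (Equiv.Perm (Fin 5))) := [F0, F1, F2, F3, F4, F5, F6, F7, F8, F9, F10]

set_option maxRecDepth 100000 in
private lemma nodupLP : (↑LP : Multiset (Finset (Equiv.Perm (Fin 5)))).Nodup := by decide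

private def PP : Finset (Finset (Equiv.Perm (Fin 5))) := ⟨↑LP, nodupLP⟩

set_option maxRecDepth 100000 in
private lemma hderL : ∀ L ∈ LL, ∀ σ ∈ L, ∀ i, σ i ≠ i := by decide

set_option maxRecDepth 100000 in
set_option maxHeartbeats 1000000 in
private lemma henum : ∀ σ : Equiv.Perm (Fin 5), (∀ i, σ i ≠ i) → σ ∈ DL := by decide

set_option maxRecDepth 100000 in
private lemma hsplit : ∀ σ ∈ DL, ∃ L ∈ LL, σ ∈ L := by decide

set_option maxRecDepth 100000 in
set_option maxHeartbeats 1000000 in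
private lemma hcross : ∀ A ∈ LL, ∀ B ∈ LL, A ≠ B → ∀ σ ∈ A, σ ∉ B := by decide

set_option maxRecDepth 100000 in
set_option maxHeartbeats 1000000 in
private lemma hcover_s6 : ∀ L ∈ LL, ∀ i j : Fin 5, i ≠ j → ∃ σ ∈ L, σ i = j ∧ ∀ τ ∈ L, τ i = j → τ = σ := by decide

private lemma hPPval : ∀ G ∈ PP, ∃ L ∈ LL, G.val = ↑L := by
  intro G hG
  have h : G ∈ LP := Multiset.mem_coe.mp (Finset.mem_def.mp hG)
  simp only [LP, List.mem_cons, List.not_mem_nil, or_false] at h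
  rcases h with rfl|rfl|rfl|rfl|rfl|rfl|rfl|rfl|rfl|rfl|rfl
  · exact ⟨L0, by exact .head _, rfl⟩
  · exact ⟨L1, by exact .tail _ (.head _), rfl⟩
  · exact ⟨L2, by exact .tail _ (.tail _ (.head _)), rfl⟩
  · exact ⟨L3, by exact .tail _ (.tail _ (.tail _ (.head _))), rfl⟩
  · exact ⟨L4, by exact .tail _ (.tail _ (.tail _ (.tail _ (.head _)))), rfl⟩
  · exact ⟨L5, by exact .tail _ (.tail _ (.tail _ (.tail _ (.tail _ (.head _))))), rfl⟩
  · exact ⟨L6, by exact .tail _ (.tail _ (.tail _ (.tail _ (.tail _ (.tail _ (.head _)))))), rfl⟩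
  · exact ⟨L7, by exact .tail _ (.tail _ (.tail _ (.tail _ (.tail _ (.tail _ (.tail _ (.head _))))))), rfl⟩
  · exact ⟨L8, by exact .tail _ (.tail _ (.tail _ (.tail _ (.tail _ (.tail _ (.tail _ (.tail _ (.head _)))))))), rfl⟩
  · exact ⟨L9, by exact .tail _ (.tail _ (.tail _ (.tail _ (.tail _ (.tail _ (.tail _ (.tail _ (.tail _ (.head _))))))))), rfl⟩
  · exact ⟨L10, by exact .tail _ (.tail _ (.tail _ (.tail _ (.tail _ (.tail _ (.tail _ (.tail _ (.tail _ (.tail _ (.head _)))))))))), rfl⟩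

private lemma hLLtoF : ∀ L ∈ LL, ∃ F, F ∈ PP ∧ F.val = ↑L := by
  intro L hL
  simp only [LL, List.mem_cons, List.not_mem_nil, or_false] at hL
  rcases hL with rfl|rfl|rfl|rfl|rfl|rfl|rfl|rfl|rfl|rfl|rfl
  · exact ⟨F0, Finset.mem_def.mpr (Multiset.mem_coe.mpr (by exact .head _)), rfl⟩
  · exact ⟨F1, Finset.mem_def.mpr (Multiset.mem_coe.mpr (by exact .tail _ (.head _))), rfl⟩
  · exact ⟨F2, Finset.mem_def.mpr (Multiset.mem_coe.mpr (by exact .tail _ (.tail _ (.head _)))), rfl⟩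
  · exact ⟨F3, Finset.mem_def.mpr (Multiset.mem_coe.mpr (by exact .tail _ (.tail _ (.tail _ (.head _))))), rfl⟩
  · exact ⟨F4, Finset.mem_def.mpr (Multiset.mem_coe.mpr (by exact .tail _ (.tail _ (.tail _ (.tail _ (.head _)))))), rfl⟩
  · exact ⟨F5, Finset.mem_def.mpr (Multiset.mem_coe.mpr (by exact .tail _ (.tail _ (.tail _ (.tail _ (.tail _ (.head _))))))), rfl⟩
  · exact ⟨F6, Finset.mem_def.mpr (Multiset.mem_coe.mpr (by exact .tail _ (.tail _ (.tail _ (.tail _ (.tail _ (.tail _ (.head _)))))))), rfl⟩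
  · exact ⟨F7, Finset.mem_def.mpr (Multiset.mem_coe.mpr (by exact .tail _ (.tail _ (.tail _ (.tail _ (.tail _ (.tail _ (.tail _ (.head _))))))))), rfl⟩
  · exact ⟨F8, Finset.mem_def.mpr (Multiset.mem_coe.mpr (by exact .tail _ (.tail _ (.tail _ (.tail _ (.tail _ (.tail _ (.tail _ (.tail _ (.head _)))))))))), rfl⟩
  · exact ⟨F9, Finset.mem_def.mpr (Multiset.mem_coe.mpr (by exact .tail _ (.tail _ (.tail _ (.tail _ (.tail _ (.tail _ (.tail _ (.tail _ (.tail _ (.head _))))))))))), rfl⟩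
  · exact ⟨F10, Finset.mem_def.mpr (Multiset.mem_coe.mpr (by exact .tail _ (.tail _ (.tail _ (.tail _ (.tail _ (.tail _ (.tail _ (.tail _ (.tail _ (.tail _ (.head _)))))))))))), rfl⟩

/-- The set of all derangements of Fin 5 can be partitioned into subsets F
such that for every ordered pair (i,j) with i ≠ j, exactly one σ ∈ F has
σ(i) = j (each subset is a 1-factorization of L_{5,1}). -/
theorem stmt_L5_1 :
    ∃ P : Finset (Finset (Equiv.Perm (Fin 5))),
      (∀ F ∈ P, ∀ σ ∈ F, ∀ i, σ i ≠ i) ∧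
      (∀ σ : Equiv.Perm (Fin 5), (∀ i, σ i ≠ i) → ∃! F, F ∈ P ∧ σ ∈ F) ∧
      (∀ F ∈ P, ∀ i j : Fin 5, i ≠ j → ∃! σ, σ ∈ F ∧ σ i = j) := by
  refine ⟨PP, ?_, ?_, ?_⟩
  · intro F hF σ hσ i
    obtain ⟨L, hL, hval⟩ := hPPval F hF
    exact hderL L hL σ (Multiset.mem_coe.mp (by rw [← hval]; exact Finset.mem_def.mp hσ)) i
  · intro σ h
    obtain ⟨L, hL, hσL⟩ := hsplit σ (henum σ h)
    obtain ⟨F, hF, hval⟩ := hLLtoF L hL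
    refine ⟨F, ⟨hF, Finset.mem_def.mpr (by rw [hval]; exact Multiset.mem_coe.mpr hσL)⟩, ?_⟩
    rintro G ⟨hG, hσG⟩
    obtain ⟨L', hL', hval'⟩ := hPPval G hG
    have hσL' : σ ∈ L' := Multiset.mem_coe.mp (by rw [← hval']; exact Finset.mem_def.mp hσG)
    have heq : L' = L := by
      by_contra hne
      exact hcross L' hL' L hL hne σ hσL' hσL
    exact Finset.val_inj.mp (by rw [hval', heq, ← hval])
  · intro F hF i j hij
    obtain ⟨L, hL, hval⟩ := hPPval F hF
    obtain ⟨σ, hσL, hσij, huniq⟩ := hcover_s6 L hL i j hij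
    have memiff : ∀ τ : Equiv.Perm (Fin 5), τ ∈ F ↔ τ ∈ L := fun τ => by
      rw [Finset.mem_def, hval, Multiset.mem_coe]
    exact ⟨σ, ⟨(memiff σ).mpr hσL, hσij⟩, fun τ hτ => huniq τ ((memiff τ).mp hτ.1) hτ.2⟩
end

section
/- The set of all permutations σ of Fin 6 satisfying ⌊σ(i)/2⌋ ≠ ⌊i/2⌋ for all i can be partitioned into subsets such that each subset F satisfies: for every ordered pair (i,j) with ⌊j/2⌋ ≠ ⌊i/2⌋, exactly one permutation σ ∈ F has σ(i) = j. (Each such subset necessarily has 4 elements.) -/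
set_option maxRecDepth 100000
set_option maxHeartbeats 2000000
set_option synthInstance.maxSize 2000
set_option synthInstance.maxHeartbeats 1000000

def vec : Fin 80 → Fin 6 → Fin 6 :=
  ![![2,3,4,5,0,1],
    ![3,2,5,4,1,0],
    ![4,5,0,1,2,3],
    ![5,4,1,0,3,2],
    ![2,3,4,5,1,0],
    ![3,2,5,4,0,1],
    ![4,5,0,1,3,2],
    ![5,4,1,0,2,3],
    ![2,3,5,4,0,1],
    ![3,2,4,5,1,0],
    ![4,5,1,0,2,3],
    ![5,4,0,1,3,2],
    ![2,3,5,4,1,0],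
    ![3,2,4,5,0,1],
    ![4,5,1,0,3,2],
    ![5,4,0,1,2,3],
    ![2,4,0,5,1,3],
    ![3,5,1,4,0,2],
    ![4,2,5,0,3,1],
    ![5,3,4,1,2,0],
    ![2,4,0,5,3,1],
    ![3,5,1,4,2,0],
    ![4,2,5,0,1,3],
    ![5,3,4,1,0,2],
    ![2,4,1,5,0,3],
    ![3,5,0,4,1,2],
    ![4,2,5,1,3,0],
    ![5,3,4,0,2,1],
    ![2,4,1,5,3,0],
    ![3,5,0,4,2,1],
    ![4,2,5,1,0,3],
    ![5,3,4,0,1,2],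
    ![2,4,5,0,1,3],
    ![3,5,4,1,0,2],
    ![4,2,0,5,3,1],
    ![5,3,1,4,2,0],
    ![2,4,5,0,3,1],
    ![3,5,4,1,2,0],
    ![4,2,0,5,1,3],
    ![5,3,1,4,0,2],
    ![2,4,5,1,0,3],
    ![3,5,4,0,1,2],
    ![4,2,1,5,3,0],
    ![5,3,0,4,2,1],
    ![2,4,5,1,3,0],
    ![3,5,4,0,2,1],
    ![4,2,1,5,0,3],
    ![5,3,0,4,1,2],
    ![2,5,0,4,1,3],
    ![3,4,1,5,0,2],
    ![4,3,5,0,2,1],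
    ![5,2,4,1,3,0],
    ![2,5,0,4,3,1],
    ![3,4,1,5,2,0],
    ![4,3,5,0,1,2],
    ![5,2,4,1,0,3],
    ![2,5,1,4,0,3],
    ![3,4,0,5,1,2],
    ![4,3,5,1,2,0],
    ![5,2,4,0,3,1],
    ![2,5,1,4,3,0],
    ![3,4,0,5,2,1],
    ![4,3,5,1,0,2],
    ![5,2,4,0,1,3],
    ![2,5,4,0,1,3],
    ![3,4,5,1,0,2],
    ![4,3,0,5,2,1],
    ![5,2,1,4,3,0],
    ![2,5,4,0,3,1],
    ![3,4,5,1,2,0],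
    ![4,3,0,5,1,2],
    ![5,2,1,4,0,3],
    ![2,5,4,1,0,3],
    ![3,4,5,0,1,2],
    ![4,3,1,5,2,0],
    ![5,2,0,4,3,1],
    ![2,5,4,1,3,0],
    ![3,4,5,0,2,1],
    ![4,3,1,5,0,2],
    ![5,2,0,4,1,3]]

def ivec : Fin 80 → Fin 6 → Fin 6 :=
  ![![4,5,0,1,2,3],
    ![5,4,1,0,3,2],
    ![2,3,4,5,0,1],
    ![3,2,5,4,1,0],
    ![5,4,0,1,2,3],
    ![4,5,1,0,3,2],
    ![2,3,5,4,0,1],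
    ![3,2,4,5,1,0],
    ![4,5,0,1,3,2],
    ![5,4,1,0,2,3],
    ![3,2,4,5,0,1],
    ![2,3,5,4,1,0],
    ![5,4,0,1,3,2],
    ![4,5,1,0,2,3],
    ![3,2,5,4,0,1],
    ![2,3,4,5,1,0],
    ![2,4,0,5,1,3],
    ![4,2,5,0,3,1],
    ![3,5,1,4,0,2],
    ![5,3,4,1,2,0],
    ![2,5,0,4,1,3],
    ![5,2,4,0,3,1],
    ![3,4,1,5,0,2],
    ![4,3,5,1,2,0],
    ![4,2,0,5,1,3],
    ![2,4,5,0,3,1],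
    ![5,3,1,4,0,2],
    ![3,5,4,1,2,0],
    ![5,2,0,4,1,3],
    ![2,5,4,0,3,1],
    ![4,3,1,5,0,2],
    ![3,4,5,1,2,0],
    ![3,4,0,5,1,2],
    ![4,3,5,0,2,1],
    ![2,5,1,4,0,3],
    ![5,2,4,1,3,0],
    ![3,5,0,4,1,2],
    ![5,3,4,0,2,1],
    ![2,4,1,5,0,3],
    ![4,2,5,1,3,0],
    ![4,3,0,5,1,2],
    ![3,4,5,0,2,1],
    ![5,2,1,4,0,3],
    ![2,5,4,1,3,0],
    ![5,3,0,4,1,2],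
    ![3,5,4,0,2,1],
    ![4,2,1,5,0,3],
    ![2,4,5,1,3,0],
    ![2,4,0,5,3,1],
    ![4,2,5,0,1,3],
    ![3,5,4,1,0,2],
    ![5,3,1,4,2,0],
    ![2,5,0,4,3,1],
    ![5,2,4,0,1,3],
    ![3,4,5,1,0,2],
    ![4,3,1,5,2,0],
    ![4,2,0,5,3,1],
    ![2,4,5,0,1,3],
    ![5,3,4,1,0,2],
    ![3,5,1,4,2,0],
    ![5,2,0,4,3,1],
    ![2,5,4,0,1,3],
    ![4,3,5,1,0,2],
    ![3,4,1,5,2,0],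
    ![3,4,0,5,2,1],
    ![4,3,5,0,1,2],
    ![2,5,4,1,0,3],
    ![5,2,1,4,3,0],
    ![3,5,0,4,2,1],
    ![5,3,4,0,1,2],
    ![2,4,5,1,0,3],
    ![4,2,1,5,3,0],
    ![4,3,0,5,2,1],
    ![3,4,5,0,1,2],
    ![5,2,4,1,0,3],
    ![2,5,1,4,3,0],
    ![5,3,0,4,2,1],
    ![3,5,4,0,1,2],
    ![4,2,5,1,0,3],
    ![2,4,1,5,3,0]]

lemma vinv1 : ∀ k x, ivec k (vec k x) = x := by decide
lemma vinv2 : ∀ k x, vec k (ivec k x) = x := by decide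

def pm (k : Fin 80) : Equiv.Perm (Fin 6) := ⟨vec k, ivec k, vinv1 k, vinv2 k⟩

lemma pm_apply (k : Fin 80) (i : Fin 6) : pm k i = vec k i := rfl

def idx (t : Fin 20) (r : Fin 4) : Fin 80 := ⟨4 * t + r, by omega⟩

def Fs (t : Fin 20) : Finset (Equiv.Perm (Fin 6)) :=
  Finset.image (fun r => pm (idx t r)) Finset.univ

def myP : Finset (Finset (Equiv.Perm (Fin 6))) := Finset.image Fs Finset.univ

lemma D1 : ∀ k : Fin 80, ∀ i : Fin 6, (vec k i : ℕ) / 2 ≠ (i : ℕ) / 2 := by decide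

lemma D2 : ∀ a : Fin 6, (a:ℕ)/2 ≠ 0 → ∀ b : Fin 6, (b:ℕ)/2 ≠ 0 → b ≠ a →
    ∀ c : Fin 6, (c:ℕ)/2 ≠ 1 → c ≠ a → c ≠ b →
    ∀ d : Fin 6, (d:ℕ)/2 ≠ 1 → d ≠ a → d ≠ b → d ≠ c →
    ∀ e : Fin 6, (e:ℕ)/2 ≠ 2 → e ≠ a → e ≠ b → e ≠ c → e ≠ d →
    ∀ f : Fin 6, (f:ℕ)/2 ≠ 2 → f ≠ a → f ≠ b → f ≠ c → f ≠ d → f ≠ e →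
    ∃ k : Fin 80, vec k 0 = a ∧ vec k 1 = b ∧ vec k 2 = c ∧ vec k 3 = d ∧
      vec k 4 = e ∧ vec k 5 = f := by decide

lemma D3 : ∀ k l : Fin 80, (∀ i, vec k i = vec l i) → k = l := by decide

lemma D4 : ∀ t : Fin 20, ∀ i j : Fin 6, (j : ℕ) / 2 ≠ (i : ℕ) / 2 →
    ∃ r : Fin 4, vec (idx t r) i = j := by decide

lemma D5 : ∀ t : Fin 20, ∀ r1 r2 : Fin 4, r1 ≠ r2 → ∀ i : Fin 6,
    vec (idx t r1) i ≠ vec (idx t r2) i := by decide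

lemma idx_val (t : Fin 20) (r : Fin 4) : (idx t r : ℕ) = 4 * t + r := rfl

lemma pm_inj {k l : Fin 80} (h : pm k = pm l) : k = l :=
  D3 k l fun i => congrArg (fun e : Equiv.Perm (Fin 6) => e i) h

lemma pm_mem_Fs {σ : Equiv.Perm (Fin 6)} {t : Fin 20} (h : σ ∈ Fs t) :
    ∃ r : Fin 4, pm (idx t r) = σ := by
  obtain ⟨r, -, hr⟩ := Finset.mem_image.1 h
  exact ⟨r, hr⟩

/-- The set of all permutations σ of Fin 6 with ⌊σ(i)/2⌋ ≠ ⌊i/2⌋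
for all i can be partitioned into subsets F such that for every ordered pair
(i,j) with ⌊j/2⌋ ≠ ⌊i/2⌋, exactly one σ ∈ F has σ(i) = j. -/
theorem stmt7 :
    ∃ P : Finset (Finset (Equiv.Perm (Fin 6))),
      (∀ F ∈ P, ∀ σ ∈ F, ∀ i : Fin 6, (σ i : ℕ) / 2 ≠ (i : ℕ) / 2) ∧
      (∀ σ : Equiv.Perm (Fin 6), (∀ i : Fin 6, (σ i : ℕ) / 2 ≠ (i : ℕ) / 2) →
        ∃! F, F ∈ P ∧ σ ∈ F) ∧
      (∀ F ∈ P, ∀ i j : Fin 6, (j : ℕ) / 2 ≠ (i : ℕ) / 2 →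
        ∃! σ, σ ∈ F ∧ σ i = j) := by
  refine ⟨myP, ?_, ?_, ?_⟩
  · intro F hF σ hσ i
    obtain ⟨t, -, rfl⟩ := Finset.mem_image.1 hF
    obtain ⟨r, rfl⟩ := pm_mem_Fs hσ
    exact D1 (idx t r) i
  · intro σ hσ
    have hne : ∀ i j : Fin 6, i ≠ j → σ i ≠ σ j := fun i j hij h => hij (σ.injective h)
    obtain ⟨k, h0, h1, h2, h3, h4, h5⟩ :=
      D2 (σ 0) (hσ 0) (σ 1) (hσ 1) (hne 1 0 (by decide)) (σ 2) (hσ 2)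
        (hne 2 0 (by decide)) (hne 2 1 (by decide)) (σ 3) (hσ 3) (hne 3 0 (by decide))
        (hne 3 1 (by decide)) (hne 3 2 (by decide)) (σ 4) (hσ 4) (hne 4 0 (by decide))
        (hne 4 1 (by decide)) (hne 4 2 (by decide)) (hne 4 3 (by decide)) (σ 5) (hσ 5)
        (hne 5 0 (by decide)) (hne 5 1 (by decide)) (hne 5 2 (by decide))
        (hne 5 3 (by decide)) (hne 5 4 (by decide))
    have hσk : σ = pm k := by
      apply Equiv.ext
      intro i
      fin_cases i
      exacts [h0.symm, h1.symm, h2.symm, h3.symm, h4.symm, h5.symm]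
    have hk4 : (k : ℕ) / 4 < 20 := by omega
    have hk4' : (k : ℕ) % 4 < 4 := by omega
    have hidx : idx ⟨(k : ℕ) / 4, hk4⟩ ⟨(k : ℕ) % 4, hk4'⟩ = k := by
      apply Fin.ext
      show 4 * ((k : ℕ) / 4) + (k : ℕ) % 4 = (k : ℕ)
      omega
    refine ⟨Fs ⟨(k : ℕ) / 4, hk4⟩,
      ⟨Finset.mem_image.2 ⟨_, Finset.mem_univ _, rfl⟩,
       Finset.mem_image.2 ⟨⟨(k : ℕ) % 4, hk4'⟩, Finset.mem_univ _, by rw [hidx, ← hσk]⟩⟩, ?_⟩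
    rintro G ⟨hG, hσG⟩
    obtain ⟨t', -, rfl⟩ := Finset.mem_image.1 hG
    obtain ⟨r', hr'⟩ := pm_mem_Fs hσG
    have hkk : idx t' r' = idx ⟨(k : ℕ) / 4, hk4⟩ ⟨(k : ℕ) % 4, hk4'⟩ := by
      rw [hidx]; exact pm_inj (by rw [hr', hσk])
    have hval := congrArg Fin.val hkk
    rw [idx_val, idx_val] at hval
    have ht' : t' = ⟨(k : ℕ) / 4, hk4⟩ := by
      apply Fin.ext
      have hb1 : (r' : ℕ) < 4 := r'.isLt
      have hb2 : ((⟨(k : ℕ) % 4, hk4'⟩ : Fin 4) : ℕ) < 4 := by omega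
      omega
    rw [ht']
  · intro F hF i j hij
    obtain ⟨t, -, rfl⟩ := Finset.mem_image.1 hF
    obtain ⟨r, hr⟩ := D4 t i j hij
    refine ⟨pm (idx t r), ⟨Finset.mem_image.2 ⟨r, Finset.mem_univ r, rfl⟩, hr⟩, ?_⟩
    rintro τ ⟨hτ, hτij⟩
    obtain ⟨r', hr'⟩ := pm_mem_Fs hτ
    have heq : vec (idx t r') i = vec (idx t r) i := by
      have : pm (idx t r') i = pm (idx t r) i := by
        rw [hr', hτij]; exact hr.symm
      exact this
    have hrr : r' = r := by
      by_contra hne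
      exact D5 t r' r hne i heq
    rw [← hr', hrr]
end

section
/- Let x₂, x₃, x₄, x₅, x₆ be the five elements of {2,3,4,5,6} in some order (all distinct). Then the five permutations of {1,...,6} given in cycle notation by (1 x₂)(x₃ x₄ x₅ x₆), (1 x₃ x₂ x₅ x₄ x₆), (1 x₄ x₂ x₆ x₅ x₃), (1 x₅ x₂ x₃ x₆ x₄), and (1 x₆ x₂ x₄ x₃ x₅) form a 1-factorization of L_{6,1}: for every ordered pair (i,j) of elements of {1,...,6} with i ≠ j, exactly one of these five permutations maps i to j. -/
private def P : Fin 5 → Equiv.Perm (Fin 6) :=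
  ![([0, 1] : List (Fin 6)).formPerm * ([2, 3, 4, 5] : List (Fin 6)).formPerm,
    ([0, 2, 1, 4, 3, 5] : List (Fin 6)).formPerm,
    ([0, 3, 1, 5, 4, 2] : List (Fin 6)).formPerm,
    ([0, 4, 1, 2, 5, 3] : List (Fin 6)).formPerm,
    ([0, 5, 1, 3, 2, 4] : List (Fin 6)).formPerm]

private theorem base :
    ∀ i j : Fin 6, i ≠ j → ∃ k, P k i = j ∧ ∀ k', P k' i = j → k' = k := by decide

private theorem formPerm_map {α : Type*} [DecidableEq α] (π : Equiv.Perm α) :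
    ∀ l : List α, (l.map (π : α → α)).formPerm = π * l.formPerm * π⁻¹
  | [] => by simp
  | [x] => by simp
  | x :: y :: l => by
    rw [List.map_cons, List.map_cons, List.formPerm_cons_cons, List.formPerm_cons_cons,
      ← List.map_cons, formPerm_map π (y :: l), Equiv.swap_apply_apply]
    group

/-- Relabelling {1,...,6} as Fin 6 (with the element 1 becoming 0),
let x₂,...,x₆ be the five nonzero elements of Fin 6 in some order.  Then the five
permutations (0 x₂)(x₃ x₄ x₅ x₆), (0 x₃ x₂ x₅ x₄ x₆), (0 x₄ x₂ x₆ x₅ x₃),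
(0 x₅ x₂ x₃ x₆ x₄), (0 x₆ x₂ x₄ x₃ x₅) form a 1-factorization of L_{6,1}:
for every ordered pair (i,j) with i ≠ j, exactly one of them maps i to j. -/
theorem stmt11 (x₂ x₃ x₄ x₅ x₆ : Fin 6)
    (h : ([0, x₂, x₃, x₄, x₅, x₆] : List (Fin 6)).Nodup) :
    ∀ i j : Fin 6, i ≠ j →
      ∃! σ, σ ∈ ({([0, x₂] : List (Fin 6)).formPerm * ([x₃, x₄, x₅, x₆] : List (Fin 6)).formPerm,
                  ([0, x₃, x₂, x₅, x₄, x₆] : List (Fin 6)).formPerm,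
                  ([0, x₄, x₂, x₆, x₅, x₃] : List (Fin 6)).formPerm,
                  ([0, x₅, x₂, x₃, x₆, x₄] : List (Fin 6)).formPerm,
                  ([0, x₆, x₂, x₄, x₃, x₅] : List (Fin 6)).formPerm} :
                    Finset (Equiv.Perm (Fin 6))) ∧ σ i = j := by
  set f : Fin 6 → Fin 6 := ![0, x₂, x₃, x₄, x₅, x₆] with hf
  have hinj : Function.Injective f := by
    rw [← List.nodup_ofFn]
    have : List.ofFn f = [0, x₂, x₃, x₄, x₅, x₆] := by
      simp [List.ofFn_succ, hf]
    rw [this]; exact h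
  set π : Equiv.Perm (Fin 6) := Equiv.ofBijective f (Finite.injective_iff_bijective.mp hinj)
    with hπ
  have hπa : ∀ k, π k = f k := fun k => rfl
  have e1 : ([0, x₂] : List (Fin 6)) = [0, 1].map π := by
    simp [hπa, hf, Matrix.cons_val_zero, Matrix.cons_val_one]
  have e1' : ([x₃, x₄, x₅, x₆] : List (Fin 6)) = [2, 3, 4, 5].map π := by
    simp [hπa, hf]; try rfl
  have e2 : ([0, x₃, x₂, x₅, x₄, x₆] : List (Fin 6)) = [0, 2, 1, 4, 3, 5].map π := by
    simp [hπa, hf]; try rfl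
  have e3 : ([0, x₄, x₂, x₆, x₅, x₃] : List (Fin 6)) = [0, 3, 1, 5, 4, 2].map π := by
    simp [hπa, hf]; try rfl
  have e4 : ([0, x₅, x₂, x₃, x₆, x₄] : List (Fin 6)) = [0, 4, 1, 2, 5, 3].map π := by
    simp [hπa, hf]; try rfl
  have e5 : ([0, x₆, x₂, x₄, x₃, x₅] : List (Fin 6)) = [0, 5, 1, 3, 2, 4].map π := by
    simp [hπa, hf]; try rfl
  set g : Fin 5 → Equiv.Perm (Fin 6) :=
    ![([0, x₂] : List (Fin 6)).formPerm * ([x₃, x₄, x₅, x₆] : List (Fin 6)).formPerm,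
      ([0, x₃, x₂, x₅, x₄, x₆] : List (Fin 6)).formPerm,
      ([0, x₄, x₂, x₆, x₅, x₃] : List (Fin 6)).formPerm,
      ([0, x₅, x₂, x₃, x₆, x₄] : List (Fin 6)).formPerm,
      ([0, x₆, x₂, x₄, x₃, x₅] : List (Fin 6)).formPerm] with hg
  have hgP : ∀ k, g k = π * P k * π⁻¹ := by
    intro k
    fin_cases k
    · show ([0, x₂] : List (Fin 6)).formPerm * ([x₃, x₄, x₅, x₆] : List (Fin 6)).formPerm =
        π * (([0, 1] : List (Fin 6)).formPerm * ([2, 3, 4, 5] : List (Fin 6)).formPerm) * π⁻¹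
      rw [e1, e1', formPerm_map, formPerm_map]; group
    · show ([0, x₃, x₂, x₅, x₄, x₆] : List (Fin 6)).formPerm =
        π * ([0, 2, 1, 4, 3, 5] : List (Fin 6)).formPerm * π⁻¹
      rw [e2, formPerm_map]
    · show ([0, x₄, x₂, x₆, x₅, x₃] : List (Fin 6)).formPerm =
        π * ([0, 3, 1, 5, 4, 2] : List (Fin 6)).formPerm * π⁻¹
      rw [e3, formPerm_map]
    · show ([0, x₅, x₂, x₃, x₆, x₄] : List (Fin 6)).formPerm =
        π * ([0, 4, 1, 2, 5, 3] : List (Fin 6)).formPerm * π⁻¹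
      rw [e4, formPerm_map]
    · show ([0, x₆, x₂, x₄, x₃, x₅] : List (Fin 6)).formPerm =
        π * ([0, 5, 1, 3, 2, 4] : List (Fin 6)).formPerm * π⁻¹
      rw [e5, formPerm_map]
  have hmem : ∀ σ : Equiv.Perm (Fin 6),
      σ ∈ ({([0, x₂] : List (Fin 6)).formPerm * ([x₃, x₄, x₅, x₆] : List (Fin 6)).formPerm,
            ([0, x₃, x₂, x₅, x₄, x₆] : List (Fin 6)).formPerm,
            ([0, x₄, x₂, x₆, x₅, x₃] : List (Fin 6)).formPerm,
            ([0, x₅, x₂, x₃, x₆, x₄] : List (Fin 6)).formPerm,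
            ([0, x₆, x₂, x₄, x₃, x₅] : List (Fin 6)).formPerm} :
              Finset (Equiv.Perm (Fin 6))) ↔ ∃ k : Fin 5, g k = σ := by
    intro σ
    simp only [Finset.mem_insert, Finset.mem_singleton]
    constructor
    · rintro (rfl | rfl | rfl | rfl | rfl)
      exacts [⟨0, rfl⟩, ⟨1, rfl⟩, ⟨2, rfl⟩, ⟨3, rfl⟩, ⟨4, rfl⟩]
    · rintro ⟨k, rfl⟩
      fin_cases k
      exacts [Or.inl rfl, Or.inr (Or.inl rfl), Or.inr (Or.inr (Or.inl rfl)),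
        Or.inr (Or.inr (Or.inr (Or.inl rfl))), Or.inr (Or.inr (Or.inr (Or.inr rfl)))]
  intro i j hij
  have hij' : π.symm i ≠ π.symm j := fun hc => hij (by simpa using congrArg π hc)
  obtain ⟨k, hk, huk⟩ := base (π.symm i) (π.symm j) hij'
  have happ : ∀ k' : Fin 5, g k' i = j ↔ P k' (π.symm i) = π.symm j := by
    intro k'
    rw [hgP k']
    simp only [Equiv.Perm.mul_apply]
    rw [show (π⁻¹ : Equiv.Perm (Fin 6)) i = π.symm i from rfl]
    constructor
    · intro hx; rw [← hx]; simp
    · intro hx; rw [hx]; simp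
  refine ⟨g k, ⟨(hmem _).2 ⟨k, rfl⟩, (happ k).2 hk⟩, ?_⟩
  rintro τ ⟨hτ, hτij⟩
  obtain ⟨k', rfl⟩ := (hmem τ).1 hτ
  rw [huk k' ((happ k').1 hτij)]
end

section
/- The set consisting of all 6-cycles of {1,...,6} together with all derangements of cycle type (2,4) whose 2-cycle contains the element 1 can be partitioned into 30 subsets, each of which is a 1-factorization of L_{6,1} containing exactly one derangement of cycle type (2,4) (with 1 in its 2-cycle) and exactly four 6-cycles. Moreover, each 6-cycle lies in exactly one of these subsets. -/
/-!
The blocks are indexed by the derangements `t = (0 a)(b c d e)`. The block of `t` consists of `t`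
and the four conjugates of the 6-cycle `(0 b a c e d)` by the powers of `(b c d e)`. It is a
1-factorization because, together with the identity, its five permutations take pairwise distinct
values at every point.

A 6-cycle is `formPerm (0 :: l)` for its cycle notation `0 :: l` read off with `Perm.toList`, and a
`(2,4)`-derangement with `0` in its 2-cycle is `swap 0 a * formPerm m` with `m` the notation of its
4-cycle. Cycle notations of one permutation differ only by rotation, so membership of these
permutations in the blocks becomes a statement about lists of points, which is checked by
evaluation.
-/

open Equiv Equiv.Perm List

section Cycles

variable {α : Type*} [DecidableEq α]

theorem disjoint_swap_swap_mul {σ : Perm α} {x : α} (hx : σ (σ x) = x) :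
    Disjoint (swap x (σ x)) (swap x (σ x) * σ) := by
  intro y
  by_cases hy : y = x ∨ y = σ x
  · right
    rcases hy with rfl | rfl <;> simp [hx]
  · left
    push Not at hy
    exact swap_apply_of_ne_of_ne hy.1 hy.2

theorem swap_mul_formPerm_apply_apply_self {x y : α} {l : List α} (hx : x ∉ l) (hy : y ∉ l) :
    (swap x y * formPerm l) ((swap x y * formPerm l) x) = x := by
  simp [formPerm_apply_of_notMem hx, formPerm_apply_of_notMem hy]

theorem swap_mul_formPerm_eq_iff {x y y' : α} {l l' : List α}
    (hl : (x :: y :: l).Nodup) (hl' : (x :: y' :: l').Nodup) (hn : 2 ≤ l.length)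
    (hn' : 2 ≤ l'.length) :
    swap x y * formPerm l = swap x y' * formPerm l' ↔ y = y' ∧ l ~r l' := by
  refine ⟨fun h => ?_, fun ⟨hy, h⟩ => by
    rw [hy, formPerm_eq_of_isRotated hl.of_cons.of_cons h]⟩
  have hx : x ∉ l := fun h => (nodup_cons.mp hl).1 (mem_cons_of_mem y h)
  have hx' : x ∉ l' := fun h => (nodup_cons.mp hl').1 (mem_cons_of_mem y' h)
  obtain rfl : y = y' := by
    simpa [formPerm_apply_of_notMem hx, formPerm_apply_of_notMem hx'] using
      congrArg (fun σ : Perm α => σ x) h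
  refine ⟨rfl, ?_⟩
  obtain ⟨p, q, r, rfl⟩ : ∃ p q r, l = p :: q :: r := by
    rcases l with _ | ⟨p, _ | ⟨q, r⟩⟩ <;> simp_all
  obtain ⟨p', q', r', rfl⟩ : ∃ p q r, l' = p :: q :: r := by
    rcases l' with _ | ⟨p, _ | ⟨q, r⟩⟩ <;> simp_all
  exact (formPerm_ext_iff hl.of_cons.of_cons hl'.of_cons.of_cons).mp (mul_left_cancel h)

variable [Fintype α]

theorem cycleType_formPerm_of_nodup {l : List α} (hl : l.Nodup) (hn : 2 ≤ l.length) :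
    (formPerm l).cycleType = {l.length} := by
  rw [(isCycle_formPerm hl hn).cycleType, support_formPerm_of_nodup l hl, toFinset_card_of_nodup hl]
  rintro x rfl
  simp at hn

theorem cycleType_swap_mul_formPerm {x y : α} {l : List α} (hl : (x :: y :: l).Nodup)
    (hn : 2 ≤ l.length) : (swap x y * formPerm l).cycleType = {2, l.length} := by
  have hxy : [x, y].Nodup := hl.sublist (by simp)
  have hl' : l.Nodup := hl.sublist (by simp)
  have hdisj : Disjoint (formPerm [x, y]) (formPerm l) :=
    (formPerm_disjoint_iff hxy hl' (by simp) hn).mpr (by simp_all)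
  rw [← formPerm_pair, hdisj.cycleType_mul, cycleType_formPerm_of_nodup hxy (by simp),
    cycleType_formPerm_of_nodup hl' hn]
  rfl

theorem formPerm_cons_inj {x : α} {l l' : List α} (hl : (x :: l).Nodup) (hl' : (x :: l').Nodup)
    (hne : l ≠ []) (hne' : l' ≠ []) : formPerm (x :: l) = formPerm (x :: l') ↔ l = l' := by
  refine ⟨fun h => ?_, fun h => h ▸ rfl⟩
  have hx := toList_formPerm_nontrivial (x :: l) (by simpa [Nat.one_le_iff_ne_zero]) hl
  have hx' := toList_formPerm_nontrivial (x :: l') (by simpa [Nat.one_le_iff_ne_zero]) hl'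
  simp only [get_eq_getElem, getElem_cons_zero, h] at hx hx'
  exact (cons_inj_right x).mp (hx.symm.trans hx')

theorem Equiv.Perm.IsCycle.formPerm_toList {σ : Perm α} (hσ : σ.IsCycle) {x : α}
    (hx : x ∈ σ.support) : formPerm (toList σ x) = σ :=
  (Equiv.Perm.formPerm_toList σ x).trans (hσ.cycleOf_eq (mem_support.mp hx))

theorem List.Nodup.mem_of_length_eq_card {l : List α} (hl : l.Nodup)
    (hlen : l.length = Fintype.card α) (a : α) : a ∈ l := by
  rw [← mem_toFinset, Finset.eq_univ_of_card l.toFinset (by rw [toFinset_card_of_nodup hl, hlen])]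
  exact Finset.mem_univ a

theorem existsUnique_mem_toFinset_apply_eq {l : List (Perm α)}
    {i j : α} (hl : (i :: l.map (· i)).Nodup) (hlen : l.length + 1 = Fintype.card α)
    (hij : i ≠ j) : ∃! σ, σ ∈ l.toFinset ∧ σ i = j := by
  have hj := hl.mem_of_length_eq_card (by simpa using hlen) j
  obtain ⟨σ, hσ, rfl⟩ : ∃ σ ∈ l, σ i = j := by simpa [Ne.symm hij] using hj
  refine ⟨σ, ⟨mem_toFinset.mpr hσ, rfl⟩, fun τ ⟨hτ, hτi⟩ => ?_⟩
  exact inj_on_of_nodup_map hl.of_cons (mem_toFinset.mp hτ) hσ hτi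

end Cycles

theorem existsUnique_mem_toFinset_map_of_countP_eq_one {ι β : Type*} [DecidableEq β]
    {l : List ι} {f : ι → β} {p : β → Prop} {q : ι → Bool}
    (hq : ∀ i ∈ l, p (f i) ↔ q i) (h : l.countP q = 1) :
    ∃! b, b ∈ (l.map f).toFinset ∧ p b := by
  rw [countP_eq_length_filter, length_eq_one_iff] at h
  obtain ⟨i, hi⟩ := h
  have hmem : ∀ j, j ∈ l ∧ q j ↔ j = i := fun j => by
    rw [← mem_singleton (a := j) (b := i), ← hi, mem_filter]
  obtain ⟨hil, hqi⟩ := (hmem i).mpr rfl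
  refine ⟨f i, ⟨by simpa using ⟨i, hil, rfl⟩, (hq i hil).mpr hqi⟩, ?_⟩
  rintro b ⟨hb, hpb⟩
  obtain ⟨j, hj, rfl⟩ := by simpa using hb
  rw [(hmem j).mp ⟨hj, (hq j hj).mp hpb⟩]

theorem ncard_sep_eq_card_filter {α : Type*} (F : Finset α) (p : α → Prop) [DecidablePred p] :
    {x ∈ (F : Set α) | p x}.ncard = (F.filter p).card := by
  rw [← Set.ncard_coe_finset, Finset.coe_filter]
  rfl

theorem mem_permutations'_iff_nodup_zero_cons {l : List (Fin 6)} :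
    l ∈ permutations' [1, 2, 3, 4, 5] ↔ (0 :: l).Nodup ∧ l.length = 5 := by
  refine ⟨fun hl => ?_, fun ⟨hl, hlen⟩ => ?_⟩
  · have hperm : (0 :: l) ~ [0, 1, 2, 3, 4, 5] := (mem_permutations'.mp hl).cons 0
    exact ⟨hperm.nodup_iff.mpr (by decide), by simpa using hperm.length_eq⟩
  rw [mem_permutations']
  refine (perm_ext_iff_of_nodup hl.of_cons (by decide)).2 fun a => ?_
  have hrange : ∀ a : Fin 6, a ∈ [1, 2, 3, 4, 5] ↔ a ≠ 0 := by decide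
  have ha := hl.mem_of_length_eq_card (by simp [hlen]) a
  rw [hrange]
  refine ⟨?_, fun h => by simpa [h] using ha⟩
  rintro h rfl
  exact (nodup_cons.mp hl).1 h

theorem exists_eq_formPerm_zero_cons {σ : Perm (Fin 6)} (hσ : σ.cycleType = {6}) :
    ∃ l ∈ permutations' [1, 2, 3, 4, 5], σ = formPerm (0 :: l) := by
  have hcyc : σ.IsCycle := card_cycleType_eq_one.mp (by rw [hσ]; rfl)
  have hsupp : σ.support.card = 6 := by rw [← sum_cycleType, hσ]; rfl
  have h0 : (0 : Fin 6) ∈ σ.support := by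
    rw [Finset.eq_univ_of_card σ.support hsupp]
    exact Finset.mem_univ 0
  obtain ⟨x, l, hxl⟩ := exists_cons_of_length_pos (length_toList_pos_of_mem_support σ 0 h0)
  obtain rfl : x = 0 := by simpa [hxl] using toList_getElem_zero σ 0 h0
  have hlen : (toList σ 0).length = 6 := by
    rw [length_toList, hcyc.cycleOf_eq (mem_support.mp h0), hsupp]
  refine ⟨l, mem_permutations'_iff_nodup_zero_cons.mpr
    ⟨hxl ▸ nodup_toList σ 0, by simpa [hxl] using hlen⟩, ?_⟩
  rw [← hxl, hcyc.formPerm_toList h0]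

theorem exists_eq_swap_zero_mul_formPerm {σ : Perm (Fin 6)} (hσ : σ.cycleType = {2, 4})
    (h0 : σ (σ 0) = 0) :
    ∃ a m, a :: m ∈ permutations' [1, 2, 3, 4, 5] ∧ σ = swap 0 a * formPerm m := by
  -- `τ` is `σ` with its 2-cycle `(0 (σ 0))` removed.
  set τ := swap 0 (σ 0) * σ with hτ
  have hστ : σ = swap 0 (σ 0) * τ := (swap_mul_self_mul _ _ _).symm
  have hσ0 : σ 0 ≠ 0 := by
    have hsupp : σ.support.card = 6 := by rw [← sum_cycleType, hσ]; rfl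
    exact mem_support.mp (by rw [Finset.eq_univ_of_card σ.support hsupp]; exact Finset.mem_univ 0)
  have hτtype : τ.cycleType = {4} := by
    have hswap : (swap 0 (σ 0)).cycleType = {2} := by
      rw [← formPerm_pair]
      exact cycleType_formPerm_of_nodup (by simpa using hσ0.symm) le_rfl
    have := (disjoint_swap_swap_mul h0).cycleType_mul
    rw [← hστ, hσ, hswap] at this
    exact (add_left_cancel (this.symm.trans rfl : {2} + τ.cycleType = {2} + {4}))
  have hτcyc : τ.IsCycle := card_cycleType_eq_one.mp (by rw [hτtype]; rfl)
  have hτsupp : τ.support.card = 4 := by rw [← sum_cycleType, hτtype]; rfl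
  obtain ⟨b, hb⟩ := Finset.card_pos.mp (by omega : 0 < τ.support.card)
  have hfix : ∀ z, τ z = z → z ∉ toList τ b := fun z hz hzm =>
    mem_support.mp ((mem_toList_iff.mp hzm).1.mem_support_iff.mp hb) hz
  have hnd : (0 :: σ 0 :: toList τ b).Nodup := by
    refine nodup_cons.mpr ⟨?_, nodup_cons.mpr ⟨hfix _ ?_, nodup_toList τ b⟩⟩
    · simpa [hσ0.symm] using hfix 0 (by simp [hτ])
    · simp [hτ, h0]
  have hlen : (toList τ b).length = 4 := by
    rw [length_toList, hτcyc.cycleOf_eq (mem_support.mp hb), hτsupp]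
  refine ⟨σ 0, toList τ b, mem_permutations'_iff_nodup_zero_cons.mpr ⟨hnd, by simp [hlen]⟩,
    ?_⟩
  rw [hτcyc.formPerm_toList hb]
  exact hστ

def transpFourCycle (a b c d e : Fin 6) : Perm (Fin 6) := swap 0 a * formPerm [b, c, d, e]

-- The conjugates of `(0 b a c e d)` by `1, (b c d e), (b d)(c e), (b e d c)`.
def blockCycles (a b c d e : Fin 6) : List (List (Fin 6)) :=
  [[0, b, a, c, e, d], [0, c, a, d, b, e], [0, d, a, e, c, b], [0, e, a, b, d, c]]

def blockPerms (a b c d e : Fin 6) : List (Perm (Fin 6)) :=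
  transpFourCycle a b c d e :: (blockCycles a b c d e).map formPerm

-- One index `(a, b, c, d, e)` for each `(0 a)(b c d e)`, written with `b` least.
def blockIndices : List (Fin 6 × Fin 6 × Fin 6 × Fin 6 × Fin 6) :=
  [(1, 2, 3, 4, 5), (1, 2, 3, 5, 4), (1, 2, 4, 5, 3),
   (1, 2, 4, 3, 5), (1, 2, 5, 4, 3), (1, 2, 5, 3, 4),
   (2, 1, 3, 4, 5), (2, 1, 3, 5, 4), (2, 1, 4, 5, 3),
   (2, 1, 4, 3, 5), (2, 1, 5, 4, 3), (2, 1, 5, 3, 4),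
   (3, 1, 2, 4, 5), (3, 1, 2, 5, 4), (3, 1, 4, 5, 2),
   (3, 1, 4, 2, 5), (3, 1, 5, 4, 2), (3, 1, 5, 2, 4),
   (4, 1, 2, 3, 5), (4, 1, 2, 5, 3), (4, 1, 3, 5, 2),
   (4, 1, 3, 2, 5), (4, 1, 5, 3, 2), (4, 1, 5, 2, 3),
   (5, 1, 2, 3, 4), (5, 1, 2, 4, 3), (5, 1, 3, 4, 2),
   (5, 1, 3, 2, 4), (5, 1, 4, 3, 2), (5, 1, 4, 2, 3)]

def blocks : Finset (Finset (Perm (Fin 6))) :=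
  (blockIndices.map fun (a, b, c, d, e) => (blockPerms a b c d e).toFinset).toFinset

theorem card_blocks : blocks.card = 30 := by rfl

-- The finite checks are `Bool`-valued `List.all` closed by `rfl`: the kernel reduces these far
-- faster than the `Decidable` instances of bounded quantifiers over lists. They enumerate
-- `permutations'`, since `permutations` is defined by well-founded recursion and does not reduce.
theorem nodup_of_mem_blockIndices {a b c d e : Fin 6} (h : (a, b, c, d, e) ∈ blockIndices) :
    [0, a, b, c, d, e].Nodup ∧ ∀ m ∈ blockCycles a b c d e, m.Nodup := by
  have hcheck : (blockIndices.all fun (a, b, c, d, e) =>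
      [0, a, b, c, d, e].Nodup && (blockCycles a b c d e).all (·.Nodup)) = true := by rfl
  simpa using all_eq_true.mp hcheck _ h

theorem nodup_cons_map_apply_blockPerms {a b c d e : Fin 6} (h : (a, b, c, d, e) ∈ blockIndices)
    (i : Fin 6) :
    (i :: (blockPerms a b c d e).map (· i)).Nodup := by
  have hcheck : (blockIndices.all fun (a, b, c, d, e) => (finRange 6).all fun i =>
      (i :: (blockPerms a b c d e).map (· i)).Nodup) = true := by rfl
  simpa using all_eq_true.mp (all_eq_true.mp hcheck _ h) i (mem_finRange i)

theorem countP_blockIndices_mem_blockCycles {l : List (Fin 6)}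
    (hl : l ∈ permutations' [1, 2, 3, 4, 5]) :
    blockIndices.countP (fun (a, b, c, d, e) => 0 :: l ∈ blockCycles a b c d e) = 1 := by
  have hcheck : ([1, 2, 3, 4, 5].permutations'.all fun l : List (Fin 6) =>
      blockIndices.countP (fun (a, b, c, d, e) => 0 :: l ∈ blockCycles a b c d e) == 1) =
        true := by
    rfl
  simpa using all_eq_true.mp hcheck l hl

theorem countP_blockIndices_isRotated {a : Fin 6} {m : List (Fin 6)}
    (hm : a :: m ∈ permutations' [1, 2, 3, 4, 5]) :
    blockIndices.countP (fun (a', b, c, d, e) => a = a' ∧ m ~r [b, c, d, e]) = 1 := by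
  have hcheck : ([1, 2, 3, 4, 5].permutations'.all fun
      | a :: m => blockIndices.countP (fun (a', b, c, d, e) => a = a' ∧ m ~r [b, c, d, e]) == 1
      | [] => true) = true := by
    rfl
  simpa using all_eq_true.mp hcheck _ hm

theorem cycleType_transpFourCycle {a b c d e : Fin 6} (h : [0, a, b, c, d, e].Nodup) :
    (transpFourCycle a b c d e).cycleType = {2, 4} :=
  cycleType_swap_mul_formPerm h (by simp)

theorem transpFourCycle_apply_apply_zero {a b c d e : Fin 6} (h : [0, a, b, c, d, e].Nodup) :
    transpFourCycle a b c d e (transpFourCycle a b c d e 0) = 0 :=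
  swap_mul_formPerm_apply_apply_self (fun h0 => (nodup_cons.mp h).1 (by simp_all))
    (fun ha => (nodup_cons.mp h.of_cons).1 (by simp_all))

theorem cycleType_formPerm_of_mem_blockCycles {a b c d e : Fin 6}
    (hy : (a, b, c, d, e) ∈ blockIndices) {m : List (Fin 6)} (hm : m ∈ blockCycles a b c d e) :
    (formPerm m).cycleType = {6} := by
  have hlen : m.length = 6 := by
    simp only [blockCycles, mem_cons, not_mem_nil, or_false] at hm
    rcases hm with rfl | rfl | rfl | rfl <;> rfl
  rw [cycleType_formPerm_of_nodup ((nodup_of_mem_blockIndices hy).2 m hm) (by omega), hlen]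

theorem formPerm_zero_cons_mem_blockPerms {a b c d e : Fin 6}
    (hy : (a, b, c, d, e) ∈ blockIndices) {l : List (Fin 6)}
    (hl : l ∈ permutations' [1, 2, 3, 4, 5]) :
    formPerm (0 :: l) ∈ blockPerms a b c d e ↔ 0 :: l ∈ blockCycles a b c d e := by
  obtain ⟨hnd, hcyc⟩ := nodup_of_mem_blockIndices hy
  obtain ⟨hl', hlen⟩ := mem_permutations'_iff_nodup_zero_cons.mp hl
  simp only [blockPerms, mem_cons, mem_map]
  refine ⟨?_, fun h => Or.inr ⟨_, h, rfl⟩⟩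
  rintro (h | ⟨m, hm, h⟩)
  · have h6 := cycleType_formPerm_of_nodup hl' (by simp [hlen])
    rw [h, cycleType_transpFourCycle hnd] at h6
    simpa using congrArg Multiset.card h6
  · obtain ⟨m', rfl, hm'⟩ : ∃ m', m = 0 :: m' ∧ m' ≠ [] := by
      simp only [blockCycles, mem_cons, not_mem_nil, or_false] at hm
      rcases hm with rfl | rfl | rfl | rfl <;> exact ⟨_, rfl, cons_ne_nil _ _⟩
    rwa [← (formPerm_cons_inj (hcyc _ hm) hl' hm' (ne_nil_of_length_pos (by omega))).mp h]

theorem swap_zero_mul_formPerm_mem_blockPerms {a b c d e : Fin 6}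
    (hy : (a, b, c, d, e) ∈ blockIndices) {a' : Fin 6} {m : List (Fin 6)}
    (hm : a' :: m ∈ permutations' [1, 2, 3, 4, 5]) :
    swap 0 a' * formPerm m ∈ blockPerms a b c d e ↔ a' = a ∧ m ~r [b, c, d, e] := by
  obtain ⟨hnd, hcyc⟩ := nodup_of_mem_blockIndices hy
  obtain ⟨hm', hlen⟩ := mem_permutations'_iff_nodup_zero_cons.mp hm
  have hmlen : 2 ≤ m.length := by simp only [length_cons] at hlen; omega
  simp only [blockPerms, mem_cons, mem_map, transpFourCycle]
  rw [swap_mul_formPerm_eq_iff hm' hnd hmlen (by simp), or_iff_left]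
  rintro ⟨l, hl, h⟩
  have hcard := congrArg (fun σ : Perm (Fin 6) => Multiset.card σ.cycleType) h
  simp only [cycleType_formPerm_of_mem_blockCycles hy hl, cycleType_swap_mul_formPerm hm' hmlen,
    Multiset.card_singleton, Multiset.insert_eq_cons, Multiset.card_cons] at hcard
  omega

theorem mem_blocks {F : Finset (Perm (Fin 6))} :
    F ∈ blocks ↔
      ∃ a b c d e, (a, b, c, d, e) ∈ blockIndices ∧ (blockPerms a b c d e).toFinset = F := by
  simp [blocks]

theorem existsUnique_mem_blocks_of_cycleType_eq_six {σ : Perm (Fin 6)} (hσ : σ.cycleType = {6}) :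
    ∃! F, F ∈ blocks ∧ σ ∈ F := by
  obtain ⟨l, hl, rfl⟩ := exists_eq_formPerm_zero_cons hσ
  refine existsUnique_mem_toFinset_map_of_countP_eq_one (fun ⟨a, b, c, d, e⟩ hy => ?_)
    (countP_blockIndices_mem_blockCycles hl)
  simpa using formPerm_zero_cons_mem_blockPerms hy hl

theorem existsUnique_mem_blocks_of_cycleType_eq_two_four {σ : Perm (Fin 6)}
    (hσ : σ.cycleType = {2, 4}) (h0 : σ (σ 0) = 0) : ∃! F, F ∈ blocks ∧ σ ∈ F := by
  obtain ⟨a, m, hm, rfl⟩ := exists_eq_swap_zero_mul_formPerm hσ h0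
  refine existsUnique_mem_toFinset_map_of_countP_eq_one (fun ⟨a, b, c, d, e⟩ hy => ?_)
    (countP_blockIndices_isRotated hm)
  simpa using swap_zero_mul_formPerm_mem_blockPerms hy hm

theorem cycleType_of_mem_blockPerms {a b c d e : Fin 6} (hy : (a, b, c, d, e) ∈ blockIndices)
    {σ : Perm (Fin 6)} (hσ : σ ∈ blockPerms a b c d e) :
    σ.cycleType = {6} ∨ (σ.cycleType = {2, 4} ∧ σ (σ 0) = 0) := by
  have hnd := (nodup_of_mem_blockIndices hy).1
  rcases mem_cons.mp hσ with rfl | hσ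
  · exact Or.inr ⟨cycleType_transpFourCycle hnd, transpFourCycle_apply_apply_zero hnd⟩
  · obtain ⟨m, hm, rfl⟩ := mem_map.mp hσ
    exact Or.inl (cycleType_formPerm_of_mem_blockCycles hy hm)

theorem filter_cycleType_eq_two_four_blockPerms {a b c d e : Fin 6}
    (hy : (a, b, c, d, e) ∈ blockIndices) :
    (blockPerms a b c d e).toFinset.filter
      (fun σ => σ.cycleType = {2, 4} ∧ σ (σ 0) = 0) = {transpFourCycle a b c d e} := by
  have hnd := (nodup_of_mem_blockIndices hy).1
  rw [blockPerms, toFinset_cons, Finset.filter_insert,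
    if_pos ⟨cycleType_transpFourCycle hnd, transpFourCycle_apply_apply_zero hnd⟩,
    Finset.filter_false_of_mem, insert_empty_eq]
  intro σ hσ ⟨h24, _⟩
  obtain ⟨m, hm, rfl⟩ := mem_map.mp (mem_toFinset.mp hσ)
  rw [cycleType_formPerm_of_mem_blockCycles hy hm] at h24
  simpa using congrArg Multiset.card h24

theorem card_filter_cycleType_eq_six_blockPerms {a b c d e : Fin 6}
    (hy : (a, b, c, d, e) ∈ blockIndices) :
    ((blockPerms a b c d e).toFinset.filter (fun σ => σ.cycleType = {6})).card = 4 := by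
  have hnd := (nodup_of_mem_blockIndices hy).1
  have hperms : (blockPerms a b c d e).Nodup :=
    (nodup_cons_map_apply_blockPerms hy 0).of_cons.of_map _
  rw [blockPerms, toFinset_cons, Finset.filter_insert, if_neg, Finset.filter_true_of_mem,
    toFinset_card_of_nodup (nodup_cons.mp hperms).2]
  · rfl
  · intro σ hσ
    obtain ⟨m, hm, rfl⟩ := mem_map.mp (mem_toFinset.mp hσ)
    exact cycleType_formPerm_of_mem_blockCycles hy hm
  · intro h6
    rw [cycleType_transpFourCycle hnd] at h6
    simpa using congrArg Multiset.card h6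

/-- (Relabelling {1,...,6} as Fin 6, with 1 becoming 0.)  The set
of all 6-cycles together with all (2,4)-derangements whose 2-cycle contains 0
can be partitioned into 30 subsets, each a 1-factorization of L_{6,1}
consisting of exactly one such (2,4)-derangement and four 6-cycles; in
particular every 6-cycle lies in exactly one subset. -/
theorem stmt12 :
    ∃ P : Finset (Finset (Equiv.Perm (Fin 6))),
      P.card = 30 ∧
      (∀ F ∈ P,
        (∀ i j : Fin 6, i ≠ j → ∃! σ, σ ∈ F ∧ σ i = j) ∧
        (∀ σ ∈ F, σ.cycleType = ({6} : Multiset ℕ) ∨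
          (σ.cycleType = ({2, 4} : Multiset ℕ) ∧ σ (σ 0) = 0)) ∧
        {σ ∈ (F : Set (Equiv.Perm (Fin 6))) |
          σ.cycleType = ({2, 4} : Multiset ℕ) ∧ σ (σ 0) = 0}.ncard = 1 ∧
        {σ ∈ (F : Set (Equiv.Perm (Fin 6))) |
          σ.cycleType = ({6} : Multiset ℕ)}.ncard = 4) ∧
      (∀ σ : Equiv.Perm (Fin 6),
        (σ.cycleType = ({6} : Multiset ℕ) ∨
          (σ.cycleType = ({2, 4} : Multiset ℕ) ∧ σ (σ 0) = 0)) →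
        ∃! F, F ∈ P ∧ σ ∈ F) ∧
      (∀ σ : Equiv.Perm (Fin 6), σ.cycleType = ({6} : Multiset ℕ) →
        ∃! F, F ∈ P ∧ σ ∈ F) := by
  refine ⟨blocks, card_blocks, fun F hF => ?_, ?_,
    fun σ hσ => existsUnique_mem_blocks_of_cycleType_eq_six hσ⟩
  · obtain ⟨a, b, c, d, e, hy, rfl⟩ := mem_blocks.mp hF
    refine ⟨fun i j hij =>
      existsUnique_mem_toFinset_apply_eq (nodup_cons_map_apply_blockPerms hy i) rfl hij,
      fun σ hσ => ?_, ?_, ?_⟩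
    · exact cycleType_of_mem_blockPerms hy (mem_toFinset.mp hσ)
    · rw [ncard_sep_eq_card_filter, filter_cycleType_eq_two_four_blockPerms hy,
        Finset.card_singleton]
    · rw [ncard_sep_eq_card_filter, card_filter_cycleType_eq_six_blockPerms hy]
  · rintro σ (hσ | ⟨hσ, h0⟩)
    · exact existsUnique_mem_blocks_of_cycleType_eq_six hσ
    · exact existsUnique_mem_blocks_of_cycleType_eq_two_four hσ h0
end

section
/- Fix y₀ ∈ {2,3,4,5,6}. There exist three pairwise disjoint 1-factorizations of L_{6,1}, each consisting of exactly one derangement of cycle type (2,2,2) containing the transposition (1 y₀) and exactly four derangements of cycle type (2,4) whose 2-cycle contains y₀ but not 1, such that together they contain all three (2,2,2)-type derangements with σ(1) = y₀ and their twelve (2,4)-type elements are pairwise distinct. -/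
open Equiv Equiv.Perm

private abbrev P6 := Equiv.Perm (Fin 6)

private lemma ct24' (a b w x y z : Fin 6) (hn2 : ([a,b] : List (Fin 6)).Nodup)
    (hn4 : ([w,x,y,z] : List (Fin 6)).Nodup)
    (hd : ∀ u ∈ ([a,b] : List (Fin 6)), u ∉ ([w,x,y,z] : List (Fin 6))) :
    (List.formPerm [a,b] * List.formPerm [w,x,y,z]).cycleType = ({2,4} : Multiset ℕ) := by
  have s2 : (List.formPerm [a,b]).support = ([a,b] : List (Fin 6)).toFinset :=
    List.support_formPerm_of_nodup _ hn2 (by simp)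
  have s4 : (List.formPerm [w,x,y,z]).support = ([w,x,y,z] : List (Fin 6)).toFinset :=
    List.support_formPerm_of_nodup _ hn4 (by simp)
  have hdisj : (List.formPerm [a,b] : P6).Disjoint (List.formPerm [w,x,y,z]) := by
    rw [disjoint_iff_disjoint_support, s2, s4]
    exact List.disjoint_toFinset_iff_disjoint.mpr hd
  have h0 : ([List.formPerm [a,b], List.formPerm [w,x,y,z]] : List P6).prod
      = List.formPerm [a,b] * List.formPerm [w,x,y,z] := by simp
  have := Equiv.Perm.cycleType_eq [List.formPerm [a,b], List.formPerm [w,x,y,z]] h0 ?_ ?_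
  · rw [this, List.map_cons, List.map_cons, List.map_nil]
    simp only [Function.comp_apply, s2, s4, List.toFinset_card_of_nodup hn2,
      List.toFinset_card_of_nodup hn4]
    rfl
  · rintro σ hσ
    simp only [List.mem_cons, List.not_mem_nil, or_false, List.mem_singleton] at hσ
    rcases hσ with rfl | rfl
    · exact List.isCycle_formPerm hn2 (by simp)
    · exact List.isCycle_formPerm hn4 (by simp)
  · exact List.pairwise_cons.mpr ⟨by simpa using hdisj, List.pairwise_singleton _ _⟩

private lemma ct222' (a b c d e f : Fin 6) (hn : ([a,b,c,d,e,f] : List (Fin 6)).Nodup) :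
    (List.formPerm [a,b] * (List.formPerm [c,d] * List.formPerm [e,f])).cycleType
      = ({2,2,2} : Multiset ℕ) := by
  simp only [List.nodup_cons, List.mem_cons, List.not_mem_nil] at hn
  have hab : ([a,b] : List (Fin 6)).Nodup := by simp; tauto
  have hcd : ([c,d] : List (Fin 6)).Nodup := by simp; tauto
  have hef : ([e,f] : List (Fin 6)).Nodup := by simp; tauto
  have sab : (List.formPerm [a,b]).support = ([a,b] : List (Fin 6)).toFinset :=
    List.support_formPerm_of_nodup _ hab (by simp)
  have scd : (List.formPerm [c,d]).support = ([c,d] : List (Fin 6)).toFinset :=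
    List.support_formPerm_of_nodup _ hcd (by simp)
  have sef : (List.formPerm [e,f]).support = ([e,f] : List (Fin 6)).toFinset :=
    List.support_formPerm_of_nodup _ hef (by simp)
  have d1 : (List.formPerm [a,b] : P6).Disjoint (List.formPerm [c,d]) := by
    rw [disjoint_iff_disjoint_support, sab, scd]
    refine List.disjoint_toFinset_iff_disjoint.mpr ?_
    intro u hu hv; simp at hu hv; rcases hu with rfl|rfl <;> rcases hv with rfl|rfl <;> tauto
  have d2 : (List.formPerm [a,b] : P6).Disjoint (List.formPerm [e,f]) := by
    rw [disjoint_iff_disjoint_support, sab, sef]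
    refine List.disjoint_toFinset_iff_disjoint.mpr ?_
    intro u hu hv; simp at hu hv; rcases hu with rfl|rfl <;> rcases hv with rfl|rfl <;> tauto
  have d3 : (List.formPerm [c,d] : P6).Disjoint (List.formPerm [e,f]) := by
    rw [disjoint_iff_disjoint_support, scd, sef]
    refine List.disjoint_toFinset_iff_disjoint.mpr ?_
    intro u hu hv; simp at hu hv; rcases hu with rfl|rfl <;> rcases hv with rfl|rfl <;> tauto
  have h0 : ([List.formPerm [a,b], List.formPerm [c,d], List.formPerm [e,f]] : List P6).prod
      = List.formPerm [a,b] * (List.formPerm [c,d] * List.formPerm [e,f]) := by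
    simp [mul_assoc]
  have := Equiv.Perm.cycleType_eq
    [List.formPerm [a,b], List.formPerm [c,d], List.formPerm [e,f]] h0 ?_ ?_
  · rw [this, List.map_cons, List.map_cons, List.map_cons, List.map_nil]
    simp only [Function.comp_apply, sab, scd, sef, List.toFinset_card_of_nodup hab,
      List.toFinset_card_of_nodup hcd, List.toFinset_card_of_nodup hef]
    rfl
  · rintro σ hσ
    simp only [List.mem_cons, List.not_mem_nil, or_false, List.mem_singleton] at hσ
    rcases hσ with rfl | rfl | rfl
    · exact List.isCycle_formPerm hab (by simp)
    · exact List.isCycle_formPerm hcd (by simp)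
    · exact List.isCycle_formPerm hef (by simp)
  · refine List.pairwise_cons.mpr ⟨?_, List.pairwise_cons.mpr ⟨?_, List.pairwise_singleton _ _⟩⟩
    · rintro σ hσ; simp only [List.mem_cons, List.not_mem_nil, or_false,
        List.mem_singleton] at hσ
      rcases hσ with rfl|rfl; exacts [d1, d2]
    · rintro σ hσ; simp only [List.not_mem_nil, or_false, List.mem_singleton] at hσ
      rcases hσ with rfl; exact d3

private lemma mu_char (σ : P6) (h : σ.cycleType = {2,2,2}) : σ * σ = 1 ∧ ∀ x, σ x ≠ x := by
  have ho : orderOf σ = 2 := by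
    rw [← Equiv.Perm.lcm_cycleType, h]; decide
  constructor
  · have := pow_orderOf_eq_one σ
    rwa [ho, sq] at this
  · have hc : σ.support.card = 6 := by
      rw [← Equiv.Perm.sum_cycleType, h]; decide
    have hu : σ.support = Finset.univ := Finset.card_eq_iff_eq_univ _ |>.mp (by simpa using hc)
    intro x
    exact Equiv.Perm.mem_support.mp (hu ▸ Finset.mem_univ x)

private def pm0 : P6 := List.formPerm [0,1] * (List.formPerm [2,3] * List.formPerm [4,5])
private def pm1 : P6 := List.formPerm [0,1] * (List.formPerm [2,4] * List.formPerm [3,5])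
private def pm2 : P6 := List.formPerm [0,1] * (List.formPerm [2,5] * List.formPerm [3,4])
private def pq (a w x y z : Fin 6) : P6 := List.formPerm [1,a] * List.formPerm [w,x,y,z]

private def FA0 : Finset P6 := {pm0, pq 2 0 4 3 5, pq 3 0 5 2 4, pq 4 0 2 5 3, pq 5 0 3 4 2}
private def FA1 : Finset P6 := {pm1, pq 2 0 3 4 5, pq 3 0 2 5 4, pq 4 0 5 2 3, pq 5 0 4 3 2}
private def FA2 : Finset P6 := {pm2, pq 2 0 3 5 4, pq 3 0 2 4 5, pq 4 0 5 3 2, pq 5 0 4 2 3}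
private def GG : Fin 3 → Finset P6 := ![FA0, FA1, FA2]

private lemma exu_of_filter {F : Finset P6} {a b : Fin 6}
    (h : (F.filter (fun σ => σ a = b)).card = 1) : ∃! σ, σ ∈ F ∧ σ a = b := by
  obtain ⟨σ, hσ⟩ := Finset.card_eq_one.mp h
  have hm : σ ∈ F.filter (fun σ => σ a = b) := hσ ▸ Finset.mem_singleton_self σ
  rw [Finset.mem_filter] at hm
  refine ⟨σ, hm, ?_⟩
  intro τ hτ
  have : τ ∈ F.filter (fun σ => σ a = b) := Finset.mem_filter.mpr hτ
  rw [hσ] at this; exact Finset.mem_singleton.mp this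

set_option maxRecDepth 40000 in
private lemma key_filter :
    ∀ i : Fin 3, ∀ a b : Fin 6, a ≠ b → ((GG i).filter fun σ => σ a = b).card = 1 := by
  decide

set_option maxRecDepth 40000 in
set_option maxHeartbeats 4000000 in
private lemma mu_list : ∀ σ : P6, σ * σ = 1 → (∀ x, σ x ≠ x) → σ 0 = 1 →
    σ = pm0 ∨ σ = pm1 ∨ σ = pm2 := by
  decide

private lemma base_s15 :
    (∀ i j : Fin 3, i ≠ j → Disjoint (GG i) (GG j)) ∧
    (∀ i : Fin 3,
      (∀ a b : Fin 6, a ≠ b → ∃! σ, σ ∈ GG i ∧ σ a = b) ∧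
      ∃ μ : P6, μ.cycleType = ({2,2,2} : Multiset ℕ) ∧ μ 0 = 1 ∧ μ ∈ GG i ∧
        (GG i).card = 5 ∧
        (∀ τ ∈ GG i, τ ≠ μ →
          τ.cycleType = ({2,4} : Multiset ℕ) ∧ τ (τ 1) = 1 ∧ τ (τ 0) ≠ 0)) ∧
    (∀ μ : P6, μ.cycleType = ({2,2,2} : Multiset ℕ) → μ 0 = 1 → ∃ i : Fin 3, μ ∈ GG i) := by
  refine ⟨by decide, ?_, ?_⟩
  · intro i
    refine ⟨fun a b hab => exu_of_filter (key_filter i a b hab), ?_⟩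
    fin_cases i
    · refine ⟨pm0, ct222' 0 1 2 3 4 5 (by decide), by decide, by decide, by decide, ?_⟩
      intro τ hτ hne
      have hτ' : τ = pm0 ∨ τ = pq 2 0 4 3 5 ∨ τ = pq 3 0 5 2 4 ∨ τ = pq 4 0 2 5 3 ∨
          τ = pq 5 0 3 4 2 := by
        simpa [GG, FA0] using hτ
      rcases hτ' with rfl | rfl | rfl | rfl | rfl
      · exact absurd rfl hne
      · exact ⟨ct24' 1 2 0 4 3 5 (by decide) (by decide) (by decide), by decide, by decide⟩
      · exact ⟨ct24' 1 3 0 5 2 4 (by decide) (by decide) (by decide), by decide, by decide⟩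
      · exact ⟨ct24' 1 4 0 2 5 3 (by decide) (by decide) (by decide), by decide, by decide⟩
      · exact ⟨ct24' 1 5 0 3 4 2 (by decide) (by decide) (by decide), by decide, by decide⟩
    · refine ⟨pm1, ct222' 0 1 2 4 3 5 (by decide), by decide, by decide, by decide, ?_⟩
      intro τ hτ hne
      have hτ' : τ = pm1 ∨ τ = pq 2 0 3 4 5 ∨ τ = pq 3 0 2 5 4 ∨ τ = pq 4 0 5 2 3 ∨
          τ = pq 5 0 4 3 2 := by
        simpa [GG, FA1] using hτ
      rcases hτ' with rfl | rfl | rfl | rfl | rfl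
      · exact absurd rfl hne
      · exact ⟨ct24' 1 2 0 3 4 5 (by decide) (by decide) (by decide), by decide, by decide⟩
      · exact ⟨ct24' 1 3 0 2 5 4 (by decide) (by decide) (by decide), by decide, by decide⟩
      · exact ⟨ct24' 1 4 0 5 2 3 (by decide) (by decide) (by decide), by decide, by decide⟩
      · exact ⟨ct24' 1 5 0 4 3 2 (by decide) (by decide) (by decide), by decide, by decide⟩
    · refine ⟨pm2, ct222' 0 1 2 5 3 4 (by decide), by decide, by decide, by decide, ?_⟩
      intro τ hτ hne
      have hτ' : τ = pm2 ∨ τ = pq 2 0 3 5 4 ∨ τ = pq 3 0 2 4 5 ∨ τ = pq 4 0 5 3 2 ∨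
          τ = pq 5 0 4 2 3 := by
        simpa [GG, FA2] using hτ
      rcases hτ' with rfl | rfl | rfl | rfl | rfl
      · exact absurd rfl hne
      · exact ⟨ct24' 1 2 0 3 5 4 (by decide) (by decide) (by decide), by decide, by decide⟩
      · exact ⟨ct24' 1 3 0 2 4 5 (by decide) (by decide) (by decide), by decide, by decide⟩
      · exact ⟨ct24' 1 4 0 5 3 2 (by decide) (by decide) (by decide), by decide, by decide⟩
      · exact ⟨ct24' 1 5 0 4 2 3 (by decide) (by decide) (by decide), by decide, by decide⟩
  · intro μ hct h0
    obtain ⟨h2, hd⟩ := mu_char μ hct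
    rcases mu_list μ h2 hd h0 with rfl | rfl | rfl
    · exact ⟨0, by decide⟩
    · exact ⟨1, by decide⟩
    · exact ⟨2, by decide⟩

/-- Fix y₀ ≠ 0 in Fin 6 (an element of {2,...,6} under the
relabelling 1 ↦ 0).  There are three pairwise disjoint 1-factorizations of
L_{6,1}, each consisting of exactly one (2,2,2)-derangement containing the
transposition (0 y₀) and four (2,4)-derangements whose 2-cycle contains y₀ but
not 0; together they contain all three (2,2,2)-derangements with σ 0 = y₀ (and
their twelve (2,4)-elements are pairwise distinct, by disjointness). -/
theorem stmt15 (y₀ : Fin 6) (hy : y₀ ≠ 0) :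
    ∃ F : Fin 3 → Finset (Equiv.Perm (Fin 6)),
      (∀ i j : Fin 3, i ≠ j → Disjoint (F i) (F j)) ∧
      (∀ i : Fin 3,
        (∀ a b : Fin 6, a ≠ b → ∃! σ, σ ∈ F i ∧ σ a = b) ∧
        ∃ μ : Equiv.Perm (Fin 6),
          μ.cycleType = ({2, 2, 2} : Multiset ℕ) ∧ μ 0 = y₀ ∧ μ ∈ F i ∧
          (F i).card = 5 ∧
          (∀ τ ∈ F i, τ ≠ μ →
            τ.cycleType = ({2, 4} : Multiset ℕ) ∧ τ (τ y₀) = y₀ ∧ τ (τ 0) ≠ 0)) ∧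
      (∀ μ : Equiv.Perm (Fin 6),
        μ.cycleType = ({2, 2, 2} : Multiset ℕ) → μ 0 = y₀ → ∃ i : Fin 3, μ ∈ F i) := by
  obtain ⟨hdisj, hfac, hall⟩ := base_s15
  set c : P6 := Equiv.swap 1 y₀ with hc
  have hcc : ∀ x, c (c x) = x := fun x => Equiv.swap_apply_self _ _ x
  have hc0 : c 0 = 0 := Equiv.swap_apply_of_ne_of_ne (by decide) (Ne.symm hy)
  have hc1 : c 1 = y₀ := Equiv.swap_apply_left _ _
  have hcy : c y₀ = 1 := Equiv.swap_apply_right _ _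
  have hcinv : c⁻¹ = c := by rw [hc]; exact Equiv.swap_inv (α := Fin 6) 1 y₀
  have hinj : Function.Injective (fun σ : P6 => c * σ * c) := by
    intro σ τ h
    exact mul_left_cancel (mul_right_cancel h)
  refine ⟨fun i => (GG i).image (fun σ => c * σ * c), ?_, ?_, ?_⟩
  · intro i j hij
    exact (Finset.disjoint_image hinj).mpr (hdisj i j hij)
  · intro i
    obtain ⟨hexu, μ, hct, hμ0, hμm, hcard, htau⟩ := hfac i
    constructor
    · intro a b hab
      have hab' : c a ≠ c b := fun h => hab (c.injective h)
      obtain ⟨σ, ⟨hm, hv⟩, huniq⟩ := hexu (c a) (c b) hab'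
      refine ⟨c * σ * c, ⟨Finset.mem_image_of_mem _ hm, ?_⟩, ?_⟩
      · simp only [Equiv.Perm.mul_apply, hv, hcc]
      · rintro τ ⟨hτm, hτv⟩
        obtain ⟨ρ, hρ, rfl⟩ := Finset.mem_image.mp hτm
        have hρv : ρ (c a) = c b := by
          simp only [Equiv.Perm.mul_apply] at hτv
          have := congrArg c hτv
          rw [hcc] at this
          rw [this]
        rw [huniq ρ ⟨hρ, hρv⟩]
    · refine ⟨c * μ * c, ?_, ?_, Finset.mem_image_of_mem _ hμm, ?_, ?_⟩
      · rw [show c * μ * c = c * μ * c⁻¹ by rw [hcinv], Equiv.Perm.cycleType_conj, hct]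
      · simp only [Equiv.Perm.mul_apply, hc0, hμ0, hc1]
      · rw [Finset.card_image_of_injective _ hinj, hcard]
      · rintro τ hτm hτne
        obtain ⟨ρ, hρ, rfl⟩ := Finset.mem_image.mp hτm
        have hρne : ρ ≠ μ := fun h => hτne (by rw [h])
        obtain ⟨h24, hρy, hρ0⟩ := htau ρ hρ hρne
        refine ⟨?_, ?_, ?_⟩
        · rw [show c * ρ * c = c * ρ * c⁻¹ by rw [hcinv], Equiv.Perm.cycleType_conj, h24]
        · simp only [Equiv.Perm.mul_apply, hcy, hcc, hρy, hc1]
        · simp only [Equiv.Perm.mul_apply, hc0, hcc]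
          intro h
          apply hρ0
          have := congrArg c h
          rw [hcc, hc0] at this
          exact this
  · intro μ hct hμ0
    have hct' : (c * μ * c).cycleType = ({2,2,2} : Multiset ℕ) := by
      rw [show c * μ * c = c * μ * c⁻¹ by rw [hcinv], Equiv.Perm.cycleType_conj, hct]
    have h0' : (c * μ * c) 0 = 1 := by
      simp only [Equiv.Perm.mul_apply, hc0, hμ0, hcy]
    obtain ⟨i, hi⟩ := hall _ hct' h0'
    refine ⟨i, ?_⟩
    have hback : c * (c * μ * c) * c = μ := Equiv.ext fun x => by
      simp only [Equiv.Perm.mul_apply, hcc]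
    exact hback ▸ Finset.mem_image_of_mem _ hi
end
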